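/- arXiv:1202.5205 — 9 statements merged into one kernel-verified Lean document; each statement's English description precedes it below -/
import Mathlib

section
/- Let H₁ and H₂ be separable real Hilbert spaces, let A : H₂ → H₁ be a bounded linear operator such that K := A ∘ A* is trace class (equivalently, A is Hilbert–Schmidt), and let R : H₂ → H₂ be an orthogonal projection. Then K* := A ∘ R ∘ A* is a positive, trace-class operator on H₁, and tr(K*) ≤ tr(K). -/
/-! Since `R` is an orthogonal projection, so is `1 - R`, and both are positive operators.
Conjugating by `A` preserves positivity, so `K* = A R A†` and `K - K* = A (1 - R) A†` are
positive. Hence `0 ≤ ⟪K* eᵢ, eᵢ⟫ ≤ ⟪K eᵢ, eᵢ⟫ = ‖A† eᵢ‖²`, and comparison of series gives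
summability of the diagonal of `K*` and the trace inequality. -/

open scoped RealInnerProductSpace InnerProduct

namespace ContinuousLinearMap

theorem conj_adjoint_le_self_comp_adjoint {𝕜 E F : Type*} [RCLike 𝕜]
    [NormedAddCommGroup E] [InnerProductSpace 𝕜 E] [CompleteSpace E]
    [NormedAddCommGroup F] [InnerProductSpace 𝕜 F] [CompleteSpace F]
    {R : E →L[𝕜] E} (hR : IsStarProjection R) (A : E →L[𝕜] F) :
    A ∘L R ∘L A† ≤ A ∘L A† := by
  have hdiff : A ∘L A† - A ∘L R ∘L A† = A ∘L (1 - R) ∘L A† := by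
    ext x
    simp
  rw [le_def, hdiff]
  exact (IsPositive.of_isStarProjection hR.one_sub).conj_adjoint A

section Real

variable {E ι : Type*} [NormedAddCommGroup E] [InnerProductSpace ℝ E]

theorem inner_apply_self_le_of_le {S T : E →L[ℝ] E} (hST : S ≤ T) (x : E) :
    ⟪S x, x⟫ ≤ ⟪T x, x⟫ := by
  have := ((le_def S T).mp hST).inner_nonneg_left x
  rwa [sub_apply, inner_sub_left, sub_nonneg] at this

theorem summable_inner_apply_self_of_le {S T : E →L[ℝ] E} (hS : S.IsPositive) (hST : S ≤ T)
    {e : ι → E} (hT : Summable fun i => ⟪T (e i), e i⟫) :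
    Summable fun i => ⟪S (e i), e i⟫ :=
  hT.of_nonneg_of_le (fun i => hS.inner_nonneg_left (e i))
    (fun i => inner_apply_self_le_of_le hST (e i))

theorem tsum_inner_apply_self_le_of_le {S T : E →L[ℝ] E} (hS : S.IsPositive) (hST : S ≤ T)
    {e : ι → E} (hT : Summable fun i => ⟪T (e i), e i⟫) :
    ∑' i, ⟪S (e i), e i⟫ ≤ ∑' i, ⟪T (e i), e i⟫ :=
  (summable_inner_apply_self_of_le hS hST hT).tsum_le_tsum
    (fun i => inner_apply_self_le_of_le hST (e i)) hT

end Real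

theorem inner_self_comp_adjoint_apply_self {E F : Type*}
    [NormedAddCommGroup E] [InnerProductSpace ℝ E] [CompleteSpace E]
    [NormedAddCommGroup F] [InnerProductSpace ℝ F] [CompleteSpace F]
    (A : E →L[ℝ] F) (x : F) : ⟪(A ∘L A†) x, x⟫ = ‖(A†) x‖ ^ 2 := by
  rw [comp_apply, ← adjoint_inner_right, real_inner_self_eq_norm_sq]

end ContinuousLinearMap

open ContinuousLinearMap

theorem stmt1_general {H₁ H₂ : Type*}
    [NormedAddCommGroup H₁] [InnerProductSpace ℝ H₁] [CompleteSpace H₁]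
    [NormedAddCommGroup H₂] [InnerProductSpace ℝ H₂] [CompleteSpace H₂]
    {ι : Type*} (e : HilbertBasis ι ℝ H₁)
    (A : H₂ →L[ℝ] H₁)
    (htc : Summable fun i => ‖ContinuousLinearMap.adjoint A (e i)‖ ^ 2)
    (R : H₂ →L[ℝ] H₂)
    (hR_sa : ContinuousLinearMap.adjoint R = R) (hR_idem : R ∘L R = R) :
    (∀ v : H₁, 0 ≤ ⟪(A ∘L R ∘L ContinuousLinearMap.adjoint A) v, v⟫) ∧
    Summable (fun i => ⟪(A ∘L R ∘L ContinuousLinearMap.adjoint A) (e i), e i⟫) ∧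
    ∑' i, ⟪(A ∘L R ∘L ContinuousLinearMap.adjoint A) (e i), e i⟫
      ≤ ∑' i, ⟪(A ∘L ContinuousLinearMap.adjoint A) (e i), e i⟫ := by
  have hR : IsStarProjection R := ⟨hR_idem, hR_sa⟩
  have hpos : (A ∘L R ∘L A†).IsPositive := (IsPositive.of_isStarProjection hR).conj_adjoint A
  have hle : A ∘L R ∘L A† ≤ A ∘L A† := conj_adjoint_le_self_comp_adjoint hR A
  have hK : Summable fun i => ⟪(A ∘L A†) (e i), e i⟫ := by
    simpa only [inner_self_comp_adjoint_apply_self] using htc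
  exact ⟨hpos.inner_nonneg_left, summable_inner_apply_self_of_le hpos hle hK,
    tsum_inner_apply_self_le_of_le hpos hle hK⟩

/-- Theorem 1, part (1), abstract form. Let `H₁`, `H₂` be separable real
Hilbert spaces, `A : H₂ → H₁` bounded linear such that `K := A ∘ A*` is trace class
(equivalently, `A*` — hence `A` — is Hilbert–Schmidt, expressed via summability of
`‖A* (e i)‖²` over a Hilbert basis `e` of `H₁`), and let `R : H₂ → H₂` be an orthogonal
projection (bounded, self-adjoint, idempotent). Then `K* := A ∘ R ∘ A*` is a positive,
trace-class operator on `H₁`, and `tr(K*) ≤ tr(K)`, traces being computed as the sum of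
diagonal inner products in the Hilbert basis `e`. -/
theorem stmt1 {H₁ H₂ : Type*}
    [NormedAddCommGroup H₁] [InnerProductSpace ℝ H₁] [CompleteSpace H₁]
    [NormedAddCommGroup H₂] [InnerProductSpace ℝ H₂] [CompleteSpace H₂]
    [TopologicalSpace.SeparableSpace H₁] [TopologicalSpace.SeparableSpace H₂]
    {ι : Type*} [Countable ι] (e : HilbertBasis ι ℝ H₁)
    (A : H₂ →L[ℝ] H₁)
    (htc : Summable fun i => ‖ContinuousLinearMap.adjoint A (e i)‖ ^ 2)
    (R : H₂ →L[ℝ] H₂)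
    (hR_sa : ContinuousLinearMap.adjoint R = R) (hR_idem : R ∘L R = R) :
    (∀ v : H₁, 0 ≤ ⟪(A ∘L R ∘L ContinuousLinearMap.adjoint A) v, v⟫) ∧
    Summable (fun i => ⟪(A ∘L R ∘L ContinuousLinearMap.adjoint A) (e i), e i⟫) ∧
    ∑' i, ⟪(A ∘L R ∘L ContinuousLinearMap.adjoint A) (e i), e i⟫
      ≤ ∑' i, ⟪(A ∘L ContinuousLinearMap.adjoint A) (e i), e i⟫ :=
  stmt1_general e A htc R hR_sa hR_idem
end

section
/- Let H₁ and H₂ be separable real Hilbert spaces, let A : H₂ → H₁ be a nonzero bounded linear operator such that A ∘ A* is trace class, with singular value decomposition given by orthonormal families (gᵢ) in H₁ and (hᵢ) in H₂ and singular values β₁ ≥ β₂ ≥ ⋯ ≥ 0 satisfying A hᵢ = βᵢ gᵢ and A* gᵢ = βᵢ hᵢ, and let R : H₂ → H₂ be an orthogonal projection. Then tr(A ∘ R ∘ A*) = tr(A ∘ A*) if and only if R hᵢ = hᵢ for every index i with βᵢ > 0. -/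
/-!
Write `R` as the orthogonal projection onto a closed subspace `K`. Both traces are sums over the
Hilbert basis of `‖R (A* e j)‖² ≤ ‖A* e j‖²`, so they agree iff `K` contains every `A* e j`, i.e.
the range of `A*`. As `(ker A)ᗮ` is the closure of that range, this means `Kᗮ ≤ ker A`. The `h i`
with `β i = 0` lie in `ker A` and those with `β i > 0` in `(ker A)ᗮ`, so splitting `v ∈ Kᗮ` along
`ker A` reduces `A v = 0` to the hypothesis that `A` vanishes on the orthogonal complement of the
`h i`.
-/

open scoped RealInnerProductSpace

open ContinuousLinearMap Submodule

section

variable {𝕜 E F : Type*} [RCLike 𝕜] [NormedAddCommGroup E] [InnerProductSpace 𝕜 E]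
  [NormedAddCommGroup F] [InnerProductSpace 𝕜 F]

theorem HilbertBasis.forall_apply_mem_iff_range_le {ι : Type*} (b : HilbertBasis ι 𝕜 E)
    (T : E →L[𝕜] F) {K : Submodule 𝕜 F} (hK : IsClosed (K : Set F)) :
    (∀ i, T (b i) ∈ K) ↔ T.range ≤ K := by
  refine ⟨fun hb => ?_, fun hT i => hT ⟨b i, rfl⟩⟩
  have hspan : span 𝕜 (Set.range b) ≤ K.comap (T : E →ₗ[𝕜] F) :=
    span_le.mpr <| Set.range_subset_iff.mpr hb
  have hclosed := topologicalClosure_minimal _ hspan (hK.preimage T.continuous)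
  rintro _ ⟨x, rfl⟩
  exact hclosed (b.dense_span ▸ mem_top : x ∈ _)

theorem Submodule.tsum_norm_sq_starProjection_eq_iff {ι : Type*} (K : Submodule 𝕜 E)
    [K.HasOrthogonalProjection] {v : ι → E} (hv : Summable fun j => ‖v j‖ ^ 2) :
    ∑' j, ‖K.starProjection (v j)‖ ^ 2 = ∑' j, ‖v j‖ ^ 2 ↔ ∀ j, v j ∈ K := by
  refine ⟨fun hsum => ?_, fun hK => tsum_congr fun j => by
    rw [starProjection_eq_self_iff.mpr (hK j)]⟩
  by_contra! ⟨j, hj⟩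
  have hle : ∀ j, ‖K.starProjection (v j)‖ ^ 2 ≤ ‖v j‖ ^ 2 := fun j => by
    gcongr; exact K.norm_starProjection_apply_le (v j)
  have hlt : ‖K.starProjection (v j)‖ ^ 2 < ‖v j‖ ^ 2 := by
    gcongr
    exact (K.norm_starProjection_apply_le (v j)).lt_of_ne
      fun h => hj ((K.mem_iff_norm_starProjection _).mpr h)
  have hsummable := hv.of_nonneg_of_le (fun _ => by positivity) hle
  exact (Summable.tsum_lt_tsum hle hlt hsummable hv).ne hsum

variable [CompleteSpace E]

theorem ContinuousLinearMap.orthogonal_le_ker_of_forall_mem {ι : Type*} {A : E →L[𝕜] F}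
    {h : ι → E} (hA : ∀ v, (∀ i, inner 𝕜 (h i) v = 0) → A v = 0) {K : Submodule 𝕜 E}
    (hK : ∀ i, h i ∈ A.ker ∨ h i ∈ K ⊓ A.kerᗮ) : Kᗮ ≤ A.ker := by
  intro v hv
  have hPv : A (A.ker.starProjection v) = 0 :=
    LinearMap.mem_ker.mp (starProjection_apply_mem _ v)
  have hAv : A v = A (v - A.ker.starProjection v) := by rw [map_sub, hPv, sub_zero]
  refine LinearMap.mem_ker.mpr (hAv.trans <| hA _ fun i => ?_)
  rcases hK i with hi | ⟨hiK, hiker⟩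
  · exact inner_right_of_mem_orthogonal hi (sub_starProjection_mem_orthogonal v)
  · rw [inner_sub_right, inner_right_of_mem_orthogonal hiK hv,
      inner_left_of_mem_orthogonal (starProjection_apply_mem _ v) hiker, sub_zero]

end

section Real

variable {E F : Type*} [NormedAddCommGroup E] [InnerProductSpace ℝ E] [CompleteSpace E]
  [NormedAddCommGroup F] [InnerProductSpace ℝ F] [CompleteSpace F]

theorem ContinuousLinearMap.inner_comp_starProjection_comp_adjoint_apply_self (A : E →L[ℝ] F)
    (K : Submodule ℝ E) [K.HasOrthogonalProjection] (x : F) :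
    ⟪(A ∘L K.starProjection ∘L adjoint A) x, x⟫ = ‖K.starProjection (adjoint A x)‖ ^ 2 := by
  rw [comp_apply, comp_apply, ← adjoint_inner_right]
  simpa using K.re_inner_starProjection_eq_normSq (adjoint A x)

theorem ContinuousLinearMap.range_adjoint_le_iff {ι : Type*} {A : E →L[ℝ] F} {g : ι → F}
    {h : ι → E} {β : ι → ℝ} (hβ : ∀ i, 0 ≤ β i) (hAh : ∀ i, A (h i) = β i • g i)
    (hAg : ∀ i, adjoint A (g i) = β i • h i) (hA : ∀ v, (∀ i, ⟪h i, v⟫ = 0) → A v = 0)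
    (K : Submodule ℝ E) [K.HasOrthogonalProjection] :
    (adjoint A).range ≤ K ↔ ∀ i, 0 < β i → h i ∈ K := by
  refine ⟨fun hle i hi => ?_, fun hK => ?_⟩
  · have : β i • h i ∈ K := hAg i ▸ hle ⟨g i, rfl⟩
    exact (smul_mem_iff _ hi.ne').mp this
  have hker : A.kerᗮ ≤ K := by
    rw [orthogonal_le_iff_orthogonal_le]
    refine orthogonal_le_ker_of_forall_mem hA fun i => ?_
    rcases (hβ i).eq_or_lt with h0 | hpos
    · left
      simp [hAh, ← h0]
    · refine .inr ⟨hK i hpos, ?_⟩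
      rw [orthogonal_ker]
      exact le_topologicalClosure _ ⟨(β i)⁻¹ • g i, by simp [hAg, smul_smul, hpos.ne']⟩
  rw [orthogonal_ker] at hker
  exact (le_topologicalClosure _).trans hker

end Real

theorem stmt3_general {H₁ H₂ : Type*}
    [NormedAddCommGroup H₁] [InnerProductSpace ℝ H₁] [CompleteSpace H₁]
    [NormedAddCommGroup H₂] [InnerProductSpace ℝ H₂] [CompleteSpace H₂]
    {ι : Type*} (e : HilbertBasis ι ℝ H₁)
    (A : H₂ →L[ℝ] H₁)
    (g : ℕ → H₁) (h : ℕ → H₂)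
    (β : ℕ → ℝ) (hβ_nonneg : ∀ i, 0 ≤ β i)
    (hAh : ∀ i, A (h i) = β i • g i)
    (hAg : ∀ i, ContinuousLinearMap.adjoint A (g i) = β i • h i)
    (hA_van : ∀ v : H₂, (∀ i, ⟪h i, v⟫ = 0) → A v = 0)
    (htc : Summable fun j => ‖ContinuousLinearMap.adjoint A (e j)‖ ^ 2)
    (R : H₂ →L[ℝ] H₂)
    (hR_sa : ContinuousLinearMap.adjoint R = R) (hR_idem : R ∘L R = R) :
    (∑' j, ⟪(A ∘L R ∘L ContinuousLinearMap.adjoint A) (e j), e j⟫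
        = ∑' j, ⟪(A ∘L ContinuousLinearMap.adjoint A) (e j), e j⟫)
      ↔ ∀ i, 0 < β i → R (h i) = h i := by
  obtain ⟨K, _, rfl⟩ := isStarProjection_iff_eq_starProjection.mp ⟨hR_idem, hR_sa⟩
  have htrace : ∀ x, ⟪(A ∘L adjoint A) x, x⟫ = ‖adjoint A x‖ ^ 2 := fun x => by
    rw [comp_apply, ← adjoint_inner_right, real_inner_self_eq_norm_sq]
  have hK : IsClosed (K : Set H₂) := K.orthogonal_orthogonal ▸ Kᗮ.isClosed_orthogonal
  simp only [inner_comp_starProjection_comp_adjoint_apply_self, htrace,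
    starProjection_eq_self_iff]
  rw [K.tsum_norm_sq_starProjection_eq_iff htc, e.forall_apply_mem_iff_range_le _ hK,
    range_adjoint_le_iff hβ_nonneg hAh hAg hA_van]

/-- Theorem 1, part (3), abstract form. Let `H₁`, `H₂` be separable real
Hilbert spaces and `A : H₂ → H₁` a nonzero bounded linear operator such that `A ∘ A*` is
trace class, with singular value decomposition given by orthonormal families `(g i)` in `H₁`
and `(h i)` in `H₂` and nonincreasing singular values `β i ≥ 0` satisfying
`A (h i) = β i • g i` and `A* (g i) = β i • h i`, with `A` vanishing on the orthogonal
complement of the span of the `h i`.  Let `R : H₂ → H₂` be an orthogonal projection.  Then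
`tr(A ∘ R ∘ A*) = tr(A ∘ A*)` (traces computed over a Hilbert basis `e` of `H₁`) if and only
if `R (h i) = h i` for every index `i` with `β i > 0`. -/
theorem stmt3 {H₁ H₂ : Type*}
    [NormedAddCommGroup H₁] [InnerProductSpace ℝ H₁] [CompleteSpace H₁]
    [NormedAddCommGroup H₂] [InnerProductSpace ℝ H₂] [CompleteSpace H₂]
    [TopologicalSpace.SeparableSpace H₁] [TopologicalSpace.SeparableSpace H₂]
    {ι : Type*} [Countable ι] (e : HilbertBasis ι ℝ H₁)
    (A : H₂ →L[ℝ] H₁) (hA_ne : A ≠ 0)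
    (g : ℕ → H₁) (h : ℕ → H₂) (hg_on : Orthonormal ℝ g) (hh_on : Orthonormal ℝ h)
    (β : ℕ → ℝ) (hβ_anti : Antitone β) (hβ_nonneg : ∀ i, 0 ≤ β i)
    (hAh : ∀ i, A (h i) = β i • g i)
    (hAg : ∀ i, ContinuousLinearMap.adjoint A (g i) = β i • h i)
    (hA_van : ∀ v : H₂, (∀ i, ⟪h i, v⟫ = 0) → A v = 0)
    (htc : Summable fun j => ‖ContinuousLinearMap.adjoint A (e j)‖ ^ 2)
    (R : H₂ →L[ℝ] H₂)
    (hR_sa : ContinuousLinearMap.adjoint R = R) (hR_idem : R ∘L R = R) :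
    (∑' j, ⟪(A ∘L R ∘L ContinuousLinearMap.adjoint A) (e j), e j⟫
        = ∑' j, ⟪(A ∘L ContinuousLinearMap.adjoint A) (e j), e j⟫)
      ↔ ∀ i, 0 < β i → R (h i) = h i :=
  stmt3_general e A g h β hβ_nonneg hAh hAg hA_van htc R hR_sa hR_idem
end

section
/- Let H₁ and H₂ be separable real Hilbert spaces, let A : H₂ → H₁ be a bounded linear operator such that A ∘ A* is trace class, with singular value decomposition given by orthonormal families (gᵢ) in H₁ and (hᵢ) in H₂ and singular values β₁ ≥ β₂ ≥ ⋯ ≥ 0 satisfying A hᵢ = βᵢ gᵢ and A* gᵢ = βᵢ hᵢ, and assume β₁ > 0. Let R : H₂ → H₂ be an orthogonal projection, and let l := max{ i : βᵢ = β₁ } (which is finite since ∑ᵢ βᵢ² < ∞). Then ‖A ∘ R ∘ A*‖ < ‖A ∘ A*‖ if and only if the only vector (a₁, …, a_l) ∈ ℝ^l satisfying R(∑_{i=1}^{l} aᵢ hᵢ) = ∑_{i=1}^{l} aᵢ hᵢ is the zero vector. -/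
/-!
Write `P` for the orthogonal projection `R` and `V = span {h₀, …, h_l}` for the top singular
subspace. As `P` is self-adjoint and idempotent, `A P A* = (A P) (A P)*`, so the C⋆-identity gives
`‖A P A*‖ = ‖A P‖²` and `‖A A*‖ = ‖A‖² = β₀²`; the claim becomes `‖A P‖ < β₀`.
A nonzero `x ∈ V` fixed by `P` gives `‖A P x‖ = ‖A x‖ = β₀ ‖x‖`. Otherwise `P` is a strict
contraction on the finite-dimensional `V`, of norm `c < 1`, so every `w` in the range of `P`
satisfies `‖proj_V w‖ ≤ c ‖w‖`. Since `A` stretches `V` by `β₀` and its orthogonal complement by at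
most `β_{l+1} < β₀`, `‖A w‖² ≤ (β_{l+1}² + (β₀² - β_{l+1}²) c²) ‖w‖²`, a constant below `β₀²`.
-/

open scoped RealInnerProductSpace

open ContinuousLinearMap Submodule

section OperatorNorm

variable {𝕜 E F : Type*} [RCLike 𝕜] [NormedAddCommGroup E] [InnerProductSpace 𝕜 E]
  [NormedAddCommGroup F] [InnerProductSpace 𝕜 F]

theorem ContinuousLinearMap.opNorm_lt_one_of_norm_apply_lt [ProperSpace E]
    (f : E →L[𝕜] F) (hf : ∀ x, x ≠ 0 → ‖f x‖ < ‖x‖) : ‖f‖ < 1 := by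
  have hmem := ((isCompact_closedBall (0 : E) 1).image f.continuous.norm).sSup_mem
    ((Metric.nonempty_closedBall.mpr zero_le_one).image _)
  rw [sSup_unitClosedBall_eq_norm] at hmem
  obtain ⟨x, hx, hfx⟩ := hmem
  rw [← hfx]
  rcases eq_or_ne x 0 with rfl | hx0
  · simp
  · exact (hf x hx0).trans_le (mem_closedBall_zero_iff.mp hx)

variable [CompleteSpace E] [CompleteSpace F]

theorem ContinuousLinearMap.norm_comp_adjoint_self (A : E →L[𝕜] F) :
    ‖A ∘L adjoint A‖ = ‖A‖ ^ 2 := by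
  simpa [sq] using norm_adjoint_comp_self (adjoint A)

theorem ContinuousLinearMap.norm_comp_starProjection_comp_adjoint (A : E →L[𝕜] F)
    (U : Submodule 𝕜 E) [U.HasOrthogonalProjection] :
    ‖A ∘L U.starProjection ∘L adjoint A‖ = ‖A ∘L U.starProjection‖ ^ 2 := by
  have hP : U.starProjection ∘L U.starProjection = U.starProjection :=
    U.isIdempotentElem_starProjection
  rw [← norm_comp_adjoint_self, adjoint_comp, (isSelfAdjoint_starProjection U).adjoint_eq,
    comp_assoc, ← comp_assoc U.starProjection, hP]

end OperatorNorm

section Orthonormal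

variable {E : Type*} [NormedAddCommGroup E] [InnerProductSpace ℝ E] {ι : Type*} {v : ι → E}

theorem Orthonormal.norm_sum_smul_sq (hv : Orthonormal ℝ v) (a : ι → ℝ) (s : Finset ι) :
    ‖∑ i ∈ s, a i • v i‖ ^ 2 = ∑ i ∈ s, a i ^ 2 := by
  rw [← real_inner_self_eq_norm_sq, hv.inner_sum]
  simp [sq]

theorem Orthonormal.sum_inner_sq_le_of_mem [Fintype ι] (hv : Orthonormal ℝ v)
    {U : Submodule ℝ E} [U.HasOrthogonalProjection] {w : E} (hw : w ∈ U) :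
    ∑ i, ⟪v i, w⟫ ^ 2 ≤ (‖U.starProjection ∘L (span ℝ (Set.range v)).subtypeL‖ * ‖w‖) ^ 2 := by
  set c := ‖U.starProjection ∘L (span ℝ (Set.range v)).subtypeL‖
  set p := ∑ i, ⟪v i, w⟫ • v i
  have hp : p ∈ span ℝ (Set.range v) :=
    sum_mem fun i _ => smul_mem _ _ (subset_span ⟨i, rfl⟩)
  have hnorm : ‖p‖ ^ 2 = ∑ i, ⟪v i, w⟫ ^ 2 := hv.norm_sum_smul_sq _ _
  have hpw : ‖p‖ ^ 2 ≤ c * ‖p‖ * ‖w‖ :=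
    calc ‖p‖ ^ 2 = ⟪p, w⟫ := by
          rw [hnorm, sum_inner]
          simp [real_inner_smul_left, sq]
      _ = ⟪U.starProjection p, w⟫ := by
          rw [U.inner_starProjection_left_eq_right, starProjection_eq_self_iff.mpr hw]
      _ ≤ ‖U.starProjection p‖ * ‖w‖ := real_inner_le_norm _ _
      _ ≤ c * ‖p‖ * ‖w‖ := by
          gcongr
          exact (U.starProjection ∘L (span ℝ (Set.range v)).subtypeL).le_opNorm ⟨p, hp⟩
  have hp_le : ‖p‖ ≤ c * ‖w‖ := by
    rcases (norm_nonneg p).eq_or_lt with hp0 | hp0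
    · rw [← hp0]; positivity
    · nlinarith
  rw [← hnorm]
  gcongr

variable [CompleteSpace E]

theorem Orthonormal.summable_smul (hv : Orthonormal ℝ v) {c : ι → ℝ}
    (hc : Summable fun i => c i ^ 2) : Summable fun i => c i • v i := by
  simpa using (hv.orthogonalFamily.summable_iff_norm_sq_summable c).2 (by simpa using hc)

theorem Orthonormal.inner_tsum_smul (hv : Orthonormal ℝ v) {c : ι → ℝ}
    (hc : Summable fun i => c i ^ 2) (j : ι) : ⟪v j, ∑' i, c i • v i⟫ = c j := by
  classical
  rw [← innerSL_apply_apply ℝ, (innerSL ℝ (v j)).map_tsum (hv.summable_smul hc),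
    tsum_eq_single j]
  · simp [hv.norm_eq_one]
  · intro i hij
    simp [hv.inner_eq_zero (Ne.symm hij)]

theorem Orthonormal.hasSum_sq_norm_tsum_smul (hv : Orthonormal ℝ v) {c : ι → ℝ}
    (hc : Summable fun i => c i ^ 2) : HasSum (fun i => c i ^ 2) (‖∑' i, c i • v i‖ ^ 2) := by
  set S := ∑' i, c i • v i
  have h := (hv.summable_smul hc).hasSum.mapL (innerSL ℝ S)
  simp only [innerSL_apply_apply, real_inner_smul_right] at h
  have hcoef : ∀ i, c i * ⟪S, v i⟫ = c i ^ 2 := fun i => by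
    rw [real_inner_comm, hv.inner_tsum_smul hc, sq]
  simp only [hcoef] at h
  rw [← real_inner_self_eq_norm_sq]
  exact h

end Orthonormal

structure IsSingularSystem {E F : Type*} [NormedAddCommGroup E] [InnerProductSpace ℝ E]
    [NormedAddCommGroup F] [InnerProductSpace ℝ F]
    (A : E →L[ℝ] F) (g : ℕ → F) (h : ℕ → E) (β : ℕ → ℝ) : Prop where
  orthonormal_left : Orthonormal ℝ g
  orthonormal_right : Orthonormal ℝ h
  antitone : Antitone β
  nonneg : ∀ i, 0 ≤ β i
  apply_right : ∀ i, A (h i) = β i • g i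
  apply_eq_zero : ∀ v, (∀ i, ⟪h i, v⟫ = 0) → A v = 0

namespace IsSingularSystem

variable {E F : Type*} [NormedAddCommGroup E] [InnerProductSpace ℝ E]
  [NormedAddCommGroup F] [InnerProductSpace ℝ F]
  {A : E →L[ℝ] F} {g : ℕ → F} {h : ℕ → E} {β : ℕ → ℝ}

theorem le_opNorm_comp_starProjection (hA : IsSingularSystem A g h β)
    {n : ℕ} (htop : ∀ i < n, β i = β 0) {U : Submodule ℝ E} [U.HasOrthogonalProjection]
    {a : Fin n → ℝ} (ha : a ≠ 0) (hU : ∑ i, a i • h i ∈ U) :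
    β 0 ≤ ‖A ∘L U.starProjection‖ := by
  have hg : Orthonormal ℝ fun i : Fin n => g i := hA.orthonormal_left.comp _ Fin.val_injective
  have hh : Orthonormal ℝ fun i : Fin n => h i := hA.orthonormal_right.comp _ Fin.val_injective
  set x := ∑ i, a i • h i
  have hx : x ≠ 0 := fun hx =>
    ha (funext (Fintype.linearIndependent_iff.mp hh.linearIndependent a hx))
  have hAx : A x = β 0 • ∑ i, a i • g i := by
    simp only [x, map_sum, map_smul, hA.apply_right, htop _ (Fin.is_lt _), Finset.smul_sum,
      smul_comm (β 0)]
  have hnorm : ‖∑ i, a i • g i‖ = ‖x‖ :=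
    (sq_eq_sq₀ (norm_nonneg _) (norm_nonneg _)).mp <| by
      rw [hg.norm_sum_smul_sq, hh.norm_sum_smul_sq]
  have hle : β 0 * ‖x‖ ≤ ‖A ∘L U.starProjection‖ * ‖x‖ := by
    calc β 0 * ‖x‖ = ‖(A ∘L U.starProjection) x‖ := by
          rw [comp_apply, starProjection_eq_self_iff.mpr hU, hAx, norm_smul,
            Real.norm_of_nonneg (hA.nonneg 0), hnorm]
      _ ≤ _ := le_opNorm _ _
  exact le_of_mul_le_mul_right hle (norm_pos_iff.mpr hx)

variable [CompleteSpace E]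

theorem apply_eq_tsum (hA : IsSingularSystem A g h β) (w : E) :
    A w = ∑' i, (β i * ⟪h i, w⟫) • g i := by
  have hh := hA.orthonormal_right
  have hx : Summable fun i => ⟪h i, w⟫ ^ 2 := by simpa using hh.inner_products_summable w
  have hw : A (w - ∑' i, ⟪h i, w⟫ • h i) = 0 :=
    hA.apply_eq_zero _ fun j => by rw [inner_sub_right, hh.inner_tsum_smul hx, sub_self]
  rw [map_sub, sub_eq_zero, A.map_tsum (hh.summable_smul hx)] at hw
  simp only [hw, map_smul, hA.apply_right, smul_smul, mul_comm]

variable [CompleteSpace F]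

theorem hasSum_sq_norm_apply (hA : IsSingularSystem A g h β) (w : E) :
    HasSum (fun i => (β i * ⟪h i, w⟫) ^ 2) (‖A w‖ ^ 2) := by
  have hx : Summable fun i => ⟪h i, w⟫ ^ 2 := by
    simpa using hA.orthonormal_right.inner_products_summable w
  have hc : Summable fun i => (β i * ⟪h i, w⟫) ^ 2 := by
    refine (hx.mul_left (β 0 ^ 2)).of_nonneg_of_le (fun i => sq_nonneg _) fun i => ?_
    rw [mul_pow]
    gcongr
    exacts [hA.nonneg i, hA.antitone (Nat.zero_le i)]
  rw [hA.apply_eq_tsum w]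
  exact hA.orthonormal_left.hasSum_sq_norm_tsum_smul hc

theorem norm_apply_sq_le (hA : IsSingularSystem A g h β) (n : ℕ) (w : E) :
    ‖A w‖ ^ 2 ≤ β n ^ 2 * ‖w‖ ^ 2 + ∑ i ∈ Finset.range n, (β i ^ 2 - β n ^ 2) * ⟪h i, w⟫ ^ 2 := by
  have hx : Summable fun i => ⟪h i, w⟫ ^ 2 := by
    simpa using hA.orthonormal_right.inner_products_summable w
  have hbessel : ∑' i, ⟪h i, w⟫ ^ 2 ≤ ‖w‖ ^ 2 := by
    simpa using hA.orthonormal_right.tsum_inner_products_le w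
  set f := fun i => if i ∈ Finset.range n then (β i ^ 2 - β n ^ 2) * ⟪h i, w⟫ ^ 2 else 0
  have hf : HasSum f (∑ i ∈ Finset.range n, f i) :=
    hasSum_sum_of_ne_finset_zero fun i hi => if_neg hi
  have hpointwise : ∀ i, (β i * ⟪h i, w⟫) ^ 2 ≤ β n ^ 2 * ⟪h i, w⟫ ^ 2 + f i := by
    intro i
    simp only [f]
    split_ifs with hi
    · exact le_of_eq (by ring)
    · rw [add_zero, mul_pow]
      have hni : n ≤ i := by simpa using hi
      exact mul_le_mul_of_nonneg_right (pow_le_pow_left₀ (hA.nonneg i) (hA.antitone hni) 2)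
        (sq_nonneg _)
  have hle := hasSum_le hpointwise (hA.hasSum_sq_norm_apply w) ((hx.hasSum.mul_left _).add hf)
  rw [Finset.sum_congr rfl fun i hi => if_pos hi] at hle
  nlinarith

theorem opNorm_eq (hA : IsSingularSystem A g h β) : ‖A‖ = β 0 := by
  refine le_antisymm (A.opNorm_le_bound (hA.nonneg 0) fun w => ?_) ?_
  · have := hA.nonneg 0
    refine (sq_le_sq₀ (norm_nonneg _) (by positivity)).mp ?_
    simpa [mul_pow] using hA.norm_apply_sq_le 0 w
  · calc β 0 = ‖A (h 0)‖ := by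
          rw [hA.apply_right, norm_smul, hA.orthonormal_left.norm_eq_one,
            Real.norm_of_nonneg (hA.nonneg 0), mul_one]
      _ ≤ ‖A‖ := by simpa [hA.orthonormal_right.norm_eq_one] using A.le_opNorm (h 0)

theorem norm_apply_sq_le_of_mem (hA : IsSingularSystem A g h β) {n : ℕ}
    (htop : ∀ i < n, β i = β 0) {U : Submodule ℝ E} [U.HasOrthogonalProjection] {w : E}
    (hw : w ∈ U) :
    ‖A w‖ ^ 2 ≤ (β n ^ 2 + (β 0 ^ 2 - β n ^ 2) *
      ‖U.starProjection ∘L (span ℝ (Set.range fun i : Fin n => h i)).subtypeL‖ ^ 2) * ‖w‖ ^ 2 := by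
  have hh : Orthonormal ℝ fun i : Fin n => h i := hA.orthonormal_right.comp _ Fin.val_injective
  have htail := hA.norm_apply_sq_le n w
  have hhead := hh.sum_inner_sq_le_of_mem hw
  rw [Fin.sum_univ_eq_sum_range (fun i => ⟪h i, w⟫ ^ 2)] at hhead
  rw [Finset.sum_congr rfl fun i hi => by rw [htop i (Finset.mem_range.mp hi)],
    ← Finset.mul_sum] at htail
  have hgap : 0 ≤ β 0 ^ 2 - β n ^ 2 := by
    nlinarith [hA.nonneg n, hA.antitone (Nat.zero_le n)]
  nlinarith [mul_le_mul_of_nonneg_left hhead hgap]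

theorem opNorm_comp_starProjection_lt (hA : IsSingularSystem A g h β)
    {n : ℕ} (htop : ∀ i < n, β i = β 0) (hgap : β n < β 0)
    {U : Submodule ℝ E} [U.HasOrthogonalProjection]
    (hU : ∀ a : Fin n → ℝ, ∑ i, a i • h i ∈ U → a = 0) :
    ‖A ∘L U.starProjection‖ < β 0 := by
  set V := span ℝ (Set.range fun i : Fin n => h i)
  have : FiniteDimensional ℝ V := FiniteDimensional.span_of_finite ℝ (Set.finite_range _)
  set c := ‖U.starProjection ∘L V.subtypeL‖
  have hc0 : 0 ≤ c := norm_nonneg (U.starProjection ∘L V.subtypeL)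
  have hc : c < 1 := by
    refine opNorm_lt_one_of_norm_apply_lt _ fun x hx =>
      (U.norm_starProjection_apply_le x).lt_of_ne fun heq => hx ?_
    obtain ⟨a, ha⟩ := (mem_span_range_iff_exists_fun ℝ).mp x.2
    have ha0 := hU a (ha ▸ (U.mem_iff_norm_starProjection x).mpr heq)
    ext
    simp [← ha, ha0]
  have hgap2 : 0 < β 0 ^ 2 - β n ^ 2 := by nlinarith [hA.nonneg n]
  have hM : 0 ≤ β n ^ 2 + (β 0 ^ 2 - β n ^ 2) * c ^ 2 := by positivity
  set K := √(β n ^ 2 + (β 0 ^ 2 - β n ^ 2) * c ^ 2)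
  have hK : K < β 0 := by
    refine (Real.sqrt_lt' (hgap.trans_le' (hA.nonneg n))).mpr ?_
    nlinarith [mul_pos hgap2 (by nlinarith : 0 < 1 - c ^ 2)]
  refine lt_of_le_of_lt (opNorm_le_bound _ (Real.sqrt_nonneg _) fun v => ?_) hK
  calc ‖A (U.starProjection v)‖ ≤ K * ‖U.starProjection v‖ :=
        (sq_le_sq₀ (norm_nonneg _) (mul_nonneg (Real.sqrt_nonneg _) (norm_nonneg _))).mp <| by
          rw [mul_pow, Real.sq_sqrt hM]
          exact hA.norm_apply_sq_le_of_mem htop (U.starProjection_apply_mem v)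
    _ ≤ K * ‖v‖ := by gcongr; exact U.norm_starProjection_apply_le v

end IsSingularSystem

theorem stmt4_general {H₁ H₂ : Type*}
    [NormedAddCommGroup H₁] [InnerProductSpace ℝ H₁] [CompleteSpace H₁]
    [NormedAddCommGroup H₂] [InnerProductSpace ℝ H₂] [CompleteSpace H₂]
    (A : H₂ →L[ℝ] H₁)
    (g : ℕ → H₁) (h : ℕ → H₂) (hg_on : Orthonormal ℝ g) (hh_on : Orthonormal ℝ h)
    (β : ℕ → ℝ) (hβ_anti : Antitone β) (hβ_nonneg : ∀ i, 0 ≤ β i)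
    (hAh : ∀ i, A (h i) = β i • g i)
    (hA_van : ∀ v : H₂, (∀ i, ⟪h i, v⟫ = 0) → A v = 0)
    (R : H₂ →L[ℝ] H₂)
    (hR_sa : ContinuousLinearMap.adjoint R = R) (hR_idem : R ∘L R = R)
    (l : ℕ) (hl : β l = β 0) (hl_max : ∀ i, β i = β 0 → i ≤ l) :
    ‖A ∘L R ∘L ContinuousLinearMap.adjoint A‖ < ‖A ∘L ContinuousLinearMap.adjoint A‖
      ↔ ∀ a : Fin (l + 1) → ℝ,
          R (∑ i, a i • h (i : ℕ)) = ∑ i, a i • h (i : ℕ) → a = 0 := by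
  obtain ⟨U, _, rfl⟩ :=
    isStarProjection_iff_eq_starProjection.mp ⟨hR_idem, isSelfAdjoint_iff'.mpr hR_sa⟩
  have hA : IsSingularSystem A g h β := ⟨hg_on, hh_on, hβ_anti, hβ_nonneg, hAh, hA_van⟩
  have htop : ∀ i < l + 1, β i = β 0 := fun i hi =>
    le_antisymm (hβ_anti (Nat.zero_le i)) (hl ▸ hβ_anti (Nat.lt_succ_iff.mp hi))
  have hgap : β (l + 1) < β 0 :=
    (hβ_anti (Nat.zero_le _)).lt_of_ne fun heq => by have := hl_max _ heq; omega
  rw [norm_comp_starProjection_comp_adjoint, norm_comp_adjoint_self, hA.opNorm_eq,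
    pow_lt_pow_iff_left₀ (norm_nonneg _) (hβ_nonneg 0) two_ne_zero]
  simp_rw [starProjection_eq_self_iff]
  refine ⟨fun hlt a ha => ?_, hA.opNorm_comp_starProjection_lt htop hgap⟩
  by_contra hne
  exact (hA.le_opNorm_comp_starProjection htop hne ha).not_gt hlt

/-- Theorem 1, part (4), abstract form. Let `H₁`, `H₂` be separable real
Hilbert spaces, `A : H₂ → H₁` bounded linear with `A ∘ A*` trace class
(`Summable fun i => β i ^ 2`), with singular value decomposition given by orthonormal
families `(g i)`, `(h i)` and nonincreasing singular values `β i ≥ 0` (`A (h i) = β i • g i`,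
`A* (g i) = β i • h i`, `A` vanishing on the orthogonal complement of the span of the `h i`),
and assume `β 0 > 0` (the top singular value, `β₁` in the paper's 1-based indexing).
Let `R : H₂ → H₂` be an orthogonal projection, and let `l` be the largest index with
`β l = β 0` (so the top singular subspace is `span {h 0, …, h l}`, of dimension `l + 1`).
Then `‖A ∘ R ∘ A*‖ < ‖A ∘ A*‖` if and only if the only vector `a ∈ ℝ^(l+1)` with
`R (∑ i, a i • h i) = ∑ i, a i • h i` is the zero vector. -/
theorem stmt4 {H₁ H₂ : Type*}
    [NormedAddCommGroup H₁] [InnerProductSpace ℝ H₁] [CompleteSpace H₁]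
    [NormedAddCommGroup H₂] [InnerProductSpace ℝ H₂] [CompleteSpace H₂]
    [TopologicalSpace.SeparableSpace H₁] [TopologicalSpace.SeparableSpace H₂]
    (A : H₂ →L[ℝ] H₁)
    (g : ℕ → H₁) (h : ℕ → H₂) (hg_on : Orthonormal ℝ g) (hh_on : Orthonormal ℝ h)
    (β : ℕ → ℝ) (hβ_anti : Antitone β) (hβ_nonneg : ∀ i, 0 ≤ β i)
    (hAh : ∀ i, A (h i) = β i • g i)
    (hAg : ∀ i, ContinuousLinearMap.adjoint A (g i) = β i • h i)
    (hA_van : ∀ v : H₂, (∀ i, ⟪h i, v⟫ = 0) → A v = 0)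
    (htc : Summable fun i => β i ^ 2)
    (hβ0_pos : 0 < β 0)
    (R : H₂ →L[ℝ] H₂)
    (hR_sa : ContinuousLinearMap.adjoint R = R) (hR_idem : R ∘L R = R)
    (l : ℕ) (hl : β l = β 0) (hl_max : ∀ i, β i = β 0 → i ≤ l) :
    ‖A ∘L R ∘L ContinuousLinearMap.adjoint A‖ < ‖A ∘L ContinuousLinearMap.adjoint A‖
      ↔ ∀ a : Fin (l + 1) → ℝ,
          R (∑ i, a i • h (i : ℕ)) = ∑ i, a i • h (i : ℕ) → a = 0 :=
  stmt4_general A g h hg_on hh_on β hβ_anti hβ_nonneg hAh hA_van R hR_sa hR_idem l hl hl_max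
end

section
/- Let G be a locally compact, separable metric group acting continuously on a locally compact, separable metric space Y, let ω_l be a left Haar measure on G with modular function Δ (so that ∫_G φ(g·g̃⁻¹) ω_l(dg) = Δ(g̃) ∫_G φ(g) ω_l(dg) for every g̃ ∈ G and integrable φ : G → ℝ), let χ : G → (0,∞) be a continuous multiplier, let f_Y be a probability density on Y with respect to ν, and suppose m(y) := ∫_G f_Y(g·y) χ(g) ω_l(dg) is positive and finite for all y and satisfies χ(g) m(g·y) = Δ(g⁻¹) m(y) for all g ∈ G, y ∈ Y. Define (Rh)(y) := m(y)⁻¹ ∫_G h(g·y) f_Y(g·y) χ(g) ω_l(dg) for integrable h. Then for every such h, every g′ ∈ G and every y ∈ Y, (Rh)(g′·y) = (Rh)(y); that is, every function in the range of R is invariant under the group action. -/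
/-!
Translating the integration variable on the right, `g ↦ g * g'⁻¹`, and splitting
`χ (g * g'⁻¹) = χ g * χ g'⁻¹` gives `χ g'⁻¹ * I y = Δ g' * I (g' • y)` for every integral
`I y = ∫ k (g • y) * χ g`. Read at `g'⁻¹`, the relation between `χ`, `m` and `Δ` says that the
normaliser `m` obeys the same identity, so the quotient `R h` is invariant.
-/

open MeasureTheory

theorem mul_integral_smul_mul_eq_of_modular {G Y : Type*} [Group G] [MeasurableSpace G]
    [MulAction G Y] {ω : Measure G} {Δ χ : G → ℝ}
    (hΔ : ∀ (gt : G) (φ : G → ℝ), Integrable φ ω →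
      ∫ g, φ (g * gt⁻¹) ∂ω = Δ gt * ∫ g, φ g ∂ω)
    (hχ_mul : ∀ g₁ g₂, χ (g₁ * g₂) = χ g₁ * χ g₂)
    (k : Y → ℝ) (g' : G) (y : Y) (hk : Integrable (fun g => k (g • g' • y) * χ g) ω) :
    χ g'⁻¹ * ∫ g, k (g • y) * χ g ∂ω = Δ g' * ∫ g, k (g • g' • y) * χ g ∂ω := by
  rw [← hΔ g' _ hk, ← integral_const_mul]
  congr 1 with g
  rw [smul_smul, inv_mul_cancel_right, hχ_mul]
  ring

theorem stmt9_general {G Y : Type*}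
    [Group G] [MeasurableSpace G]
    [MulAction G Y]
    (ω : Measure G)
    (Δ : G → ℝ)
    (hΔ : ∀ (gt : G) (φ : G → ℝ), Integrable φ ω →
      ∫ g, φ (g * gt⁻¹) ∂ω = Δ gt * ∫ g, φ g ∂ω)
    (fY : Y → ℝ)
    (χ : G → ℝ) (hχ_pos : ∀ g, 0 < χ g)
    (hχ_mul : ∀ g₁ g₂, χ (g₁ * g₂) = χ g₁ * χ g₂)
    (m : Y → ℝ)
    (hm_pos : ∀ y, 0 < m y)
    (hm_rel : ∀ (g : G) (y : Y), χ g * m (g • y) = Δ g⁻¹ * m y) :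
    ∀ (h : Y → ℝ), (∀ y, Integrable (fun g => h (g • y) * fY (g • y) * χ g) ω) →
      ∀ (g' : G) (y : Y),
        (m (g' • y))⁻¹ * ∫ g, h (g • (g' • y)) * fY (g • (g' • y)) * χ g ∂ω
          = (m y)⁻¹ * ∫ g, h (g • y) * fY (g • y) * χ g ∂ω := by
  intro h hint g' y
  have hm : χ g'⁻¹ * m y = Δ g' * m (g' • y) := by
    simpa only [inv_smul_smul, inv_inv] using hm_rel g'⁻¹ (g' • y)
  have hI := mul_integral_smul_mul_eq_of_modular hΔ hχ_mul (fun z => h z * fY z) g' y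
    (hint (g' • y))
  have hχ := (hχ_pos g'⁻¹).ne'
  have hmy := (hm_pos y).ne'
  have hmy' := (hm_pos (g' • y)).ne'
  field_simp
  apply mul_left_cancel₀ hχ
  linear_combination (∫ g, h (g • g' • y) * fY (g • g' • y) * χ g ∂ω) * hm - m (g' • y) * hI

/-- necessity direction of Lemma 2. With the setup of the group-action
Markov operator `R` — `G` a locally compact, separable metric group acting continuously on
a locally compact, separable metric space `Y`, `ω` a left Haar measure on `G` with modular
function `Δ` (so `∫ g, φ (g * g̃⁻¹) ∂ω = Δ g̃ * ∫ g, φ g ∂ω` for integrable `φ`),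
`χ` a continuous multiplier, `fY` a probability density on `Y` w.r.t. `ν`, and
`m y := ∫ g, fY (g • y) * χ g ∂ω` positive and finite with
`χ g * m (g • y) = Δ g⁻¹ * m y` — every function in the range of
`(R h) y := (m y)⁻¹ * ∫ g, h (g • y) * fY (g • y) * χ g ∂ω` is invariant under the group
action: `(R h) (g' • y) = (R h) y`. -/
theorem stmt9 {G Y : Type*}
    [Group G] [MetricSpace G] [IsTopologicalGroup G] [LocallyCompactSpace G]
    [TopologicalSpace.SeparableSpace G] [MeasurableSpace G] [BorelSpace G]
    [MetricSpace Y] [LocallyCompactSpace Y] [TopologicalSpace.SeparableSpace Y]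
    [MeasurableSpace Y] [BorelSpace Y]
    [MulAction G Y] (hact : Continuous fun p : G × Y => p.1 • p.2)
    (ω : Measure G) [ω.IsHaarMeasure]
    (Δ : G → ℝ) (hΔ_pos : ∀ g, 0 < Δ g)
    (hΔ : ∀ (gt : G) (φ : G → ℝ), Integrable φ ω →
      ∫ g, φ (g * gt⁻¹) ∂ω = Δ gt * ∫ g, φ g ∂ω)
    (ν : Measure Y)
    (fY : Y → ℝ) (hfY_nonneg : ∀ y, 0 ≤ fY y) (hfY_prob : ∫ y, fY y ∂ν = 1)
    (χ : G → ℝ) (hχ_cont : Continuous χ) (hχ_pos : ∀ g, 0 < χ g)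
    (hχ_mul : ∀ g₁ g₂, χ (g₁ * g₂) = χ g₁ * χ g₂)
    (m : Y → ℝ) (hm_def : ∀ y, m y = ∫ g, fY (g • y) * χ g ∂ω)
    (hm_pos : ∀ y, 0 < m y)
    (hm_fin : ∀ y, Integrable (fun g => fY (g • y) * χ g) ω)
    (hm_rel : ∀ (g : G) (y : Y), χ g * m (g • y) = Δ g⁻¹ * m y) :
    ∀ (h : Y → ℝ), (∀ y, Integrable (fun g => h (g • y) * fY (g • y) * χ g) ω) →
      ∀ (g' : G) (y : Y),
        (m (g' • y))⁻¹ * ∫ g, h (g • (g' • y)) * fY (g • (g' • y)) * χ g ∂ω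
          = (m y)⁻¹ * ∫ g, h (g • y) * fY (g • y) * χ g ∂ω :=
  stmt9_general ω Δ hΔ fY χ hχ_pos hχ_mul m hm_pos hm_rel
end

section
/- Let f : X × Y → [0,∞) be a probability density with respect to μ ⊗ ν with positive marginals f_X and f_Y, and suppose it admits a pointwise-convergent singular value expansion f(x,y)/(f_X(x) f_Y(y)) = ∑_{j≥0} β_j g_j(x) h_j(y), where β₀ = 1, g₀ ≡ 1, h₀ ≡ 1, (g_j) and (h_j) are orthonormal bases of L²(f_X) and L²(f_Y), and β_j ∈ [0,1] are nonincreasing. Let G act on Y, and suppose that for every index j with β_j > 0 the function h_j is invariant under the group action, i.e., h_j(g·y) = h_j(y) for all g ∈ G, y ∈ Y. Then f_{X|Y}(x|y) = f_{X|Y}(x|g·y) for all g ∈ G, x ∈ X, and y ∈ Y, where f_{X|Y}(x|y) = f(x,y)/f_Y(y). -/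
open MeasureTheory

theorem stmt11_general {X Y G : Type*}
    [Group G] [MulAction G Y]
    (f : X → Y → ℝ)
    (fX : X → ℝ) (fY : Y → ℝ)
    (hfX_pos : ∀ x, 0 < fX x)
    (β : ℕ → ℝ) (gf : ℕ → X → ℝ) (hf : ℕ → Y → ℝ)
    (hβ_mem : ∀ j, β j ∈ Set.Icc (0 : ℝ) 1)
    (hexp : ∀ x y, f x y / (fX x * fY y) = ∑' j, β j * gf j x * hf j y)
    (hinv : ∀ j, 0 < β j → ∀ (g : G) (y : Y), hf j (g • y) = hf j y) :
    ∀ (g : G) (x : X) (y : Y), f x y / fY y = f x (g • y) / fY (g • y) := by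
  intro g x y
  have hterm : ∀ j, β j * gf j x * hf j y = β j * gf j x * hf j (g • y) := by
    intro j
    rcases (hβ_mem j).1.lt_or_eq with hβ | hβ
    · rw [hinv j hβ g y]
    · simp [← hβ]
  have hratio : f x y / fY y / fX x = f x (g • y) / fY (g • y) / fX x := by
    simp only [div_div, mul_comm (fY _), hexp, tsum_congr hterm]
  exact (div_left_inj' (hfX_pos x).ne').mp hratio

/-- key step in the proof of Theorem 2. Let `f : X × Y → [0,∞)` be a
probability density with respect to `μ ⊗ ν` with positive marginals `fX`, `fY`, admitting a
pointwise-convergent singular value expansion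
`f x y / (fX x * fY y) = ∑' j, β j * gf j x * hf j y`, where `β 0 = 1`, `gf 0 ≡ 1`,
`hf 0 ≡ 1`, the families `(gf j)` and `(hf j)` are orthonormal bases of `L²(fX)` and
`L²(fY)` (orthonormality and completeness stated via weighted integrals), and
`β j ∈ [0,1]` is nonincreasing.  Let a group `G` act on `Y` and suppose `hf j` is invariant
under the action whenever `β j > 0`.  Then the conditional density
`f_{X|Y}(x|y) = f x y / fY y` is invariant: `f x y / fY y = f x (g • y) / fY (g • y)`. -/
theorem stmt11 {X Y G : Type*}
    [MeasurableSpace X] [MeasurableSpace Y]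
    [Group G] [MulAction G Y]
    (μ : Measure X) (ν : Measure Y) [SigmaFinite μ] [SigmaFinite ν]
    (f : X → Y → ℝ) (hf_nonneg : ∀ x y, 0 ≤ f x y)
    (fX : X → ℝ) (fY : Y → ℝ)
    (hfX_def : ∀ x, fX x = ∫ y, f x y ∂ν) (hfY_def : ∀ y, fY y = ∫ x, f x y ∂μ)
    (hfX_pos : ∀ x, 0 < fX x) (hfY_pos : ∀ y, 0 < fY y)
    (hf_prob : ∫ x, ∫ y, f x y ∂ν ∂μ = 1)
    (β : ℕ → ℝ) (gf : ℕ → X → ℝ) (hf : ℕ → Y → ℝ)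
    (hβ0 : β 0 = 1) (hg0 : ∀ x, gf 0 x = 1) (hh0 : ∀ y, hf 0 y = 1)
    (hβ_mem : ∀ j, β j ∈ Set.Icc (0 : ℝ) 1) (hβ_anti : Antitone β)
    (hg_ortho : ∀ i j, (∫ x, gf i x * gf j x * fX x ∂μ) = if i = j then 1 else 0)
    (hh_ortho : ∀ i j, (∫ y, hf i y * hf j y * fY y ∂ν) = if i = j then 1 else 0)
    (hg_complete : ∀ φ : X → ℝ, Integrable (fun x => φ x ^ 2 * fX x) μ →
      (∀ i, ∫ x, φ x * gf i x * fX x ∂μ = 0) → ∀ᵐ x ∂μ, φ x = 0)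
    (hh_complete : ∀ φ : Y → ℝ, Integrable (fun y => φ y ^ 2 * fY y) ν →
      (∀ i, ∫ y, φ y * hf i y * fY y ∂ν = 0) → ∀ᵐ y ∂ν, φ y = 0)
    (hexp : ∀ x y, f x y / (fX x * fY y) = ∑' j, β j * gf j x * hf j y)
    (hinv : ∀ j, 0 < β j → ∀ (g : G) (y : Y), hf j (g • y) = hf j y) :
    ∀ (g : G) (x : X) (y : Y), f x y / fY y = f x (g • y) / fY (g • y) :=
  stmt11_general f fX fY hfX_pos β gf hf hβ_mem hexp hinv
end

section
/- Fix integers m ≥ p ≥ 1, a matrix X ∈ ℝ^{m×p} of full column rank p with rows x₁ᵀ, …, x_mᵀ, and z ∈ ℝ^m. Then ∫_{ℝ^p} exp(−(1/2) ∑_{i=1}^m |zᵢ − xᵢᵀβ|) dβ < ∞. -/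
/-!
Since `X` has full column rank, `β ↦ Xβ` is injective and hence, in finite dimension,
bounded below: `a‖β‖ ≤ ‖Xβ‖` for some `a > 0`. The ℓ¹-sum in the exponent dominates the sup norm
of `z - Xβ`, which by the triangle inequality is at least `a‖β‖ - ‖z‖`. So the integrand is at most
a constant times `exp (-(a/2) ‖β‖)`, and exponential decay of the norm beats the polynomial
volume growth of a finite-dimensional space.
-/

open Asymptotics Filter MeasureTheory Matrix Module Real

theorem Pi.norm_le_sum_norm {ι : Type*} [Fintype ι] {E : ι → Type*}
    [∀ i, SeminormedAddGroup (E i)] (x : ∀ i, E i) : ‖x‖ ≤ ∑ i, ‖x i‖ :=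
  (pi_norm_le_iff_of_nonneg (Finset.sum_nonneg fun _ _ => norm_nonneg _)).mpr fun i =>
    Finset.single_le_sum (f := fun i => ‖x i‖) (fun _ _ => norm_nonneg _) (Finset.mem_univ i)

theorem Matrix.injective_mulVecLin_of_rank_eq_card {m n K : Type*} [Fintype m] [Fintype n]
    [Field K] {A : Matrix m n K} (hA : A.rank = Fintype.card n) :
    Function.Injective A.mulVecLin := by
  have hker := LinearMap.finrank_range_add_finrank_ker A.mulVecLin
  rw [finrank_fintype_fun_eq_card, ← Matrix.rank, hA, add_eq_left,
    Submodule.finrank_eq_zero] at hker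
  exact LinearMap.ker_eq_bot.mp hker

theorem isBigO_exp_neg_mul_one_add_rpow {c : ℝ} (hc : 0 < c) (r : ℝ) :
    (fun t : ℝ => exp (-c * t)) =O[atTop] fun t => (1 + t) ^ r := by
  have h := (isLittleO_exp_neg_mul_rpow_atTop hc r).isBigO.comp_tendsto
    (tendsto_atTop_add_const_left atTop 1 tendsto_id)
  refine (h.const_mul_left (exp c)).congr_left fun t => ?_
  simp only [Function.comp_apply, id, ← exp_add]
  ring_nf

section ExpDecay

variable {E : Type*} [NormedAddCommGroup E] [NormedSpace ℝ E] [FiniteDimensional ℝ E]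
  [MeasurableSpace E] [BorelSpace E] (μ : Measure E) [μ.IsAddHaarMeasure]

theorem integrable_exp_neg_mul_norm {c : ℝ} (hc : 0 < c) :
    Integrable (fun x : E => exp (-c * ‖x‖)) μ := by
  have hr : (finrank ℝ E : ℝ) < finrank ℝ E + 1 := lt_add_one _
  have hO : (fun x : E => exp (-c * ‖x‖)) =O[cocompact E]
      fun x => (1 + ‖x‖) ^ (-(finrank ℝ E + 1 : ℝ)) :=
    (isBigO_exp_neg_mul_one_add_rpow hc _).comp_tendsto tendsto_norm_cocompact_atTop
  exact (Continuous.locallyIntegrable (by fun_prop)).integrable_of_isBigO_cocompact hO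
    ((integrable_one_add_norm hr).integrableAtFilter _)

theorem integrable_exp_neg_mul_norm_sub_of_injective {F : Type*} [NormedAddCommGroup F]
    [NormedSpace ℝ F] {A : E →ₗ[ℝ] F} (hA : Function.Injective A) {c : ℝ} (hc : 0 < c) (y : F) :
    Integrable (fun x => exp (-c * ‖y - A x‖)) μ := by
  obtain ⟨K, -, hK⟩ := A.injective_iff_antilipschitz.mp hA
  obtain ⟨a, ha, hAx⟩ := antilipschitzWith_iff_exists_mul_le_norm.mp ⟨K, hK⟩
  have hcont : Continuous A := A.continuous_of_finiteDimensional
  refine ((integrable_exp_neg_mul_norm μ (mul_pos hc ha)).const_mul (exp (c * ‖y‖))).mono'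
    (by fun_prop) (ae_of_all _ fun x => ?_)
  have hlower : a * ‖x‖ - ‖y‖ ≤ ‖y - A x‖ := by
    linarith [hAx x, norm_le_norm_sub_add (A x) y, norm_sub_rev y (A x)]
  rw [norm_of_nonneg (exp_nonneg _), ← exp_add]
  refine exp_le_exp.mpr ?_
  calc -c * ‖y - A x‖ ≤ -c * (a * ‖x‖ - ‖y‖) := mul_le_mul_of_nonpos_left hlower (by linarith)
    _ = c * ‖y‖ + -(c * a) * ‖x‖ := by ring

end ExpDecay

theorem stmt14_general (m p : ℕ)
    (X : Matrix (Fin m) (Fin p) ℝ) (hrank : X.rank = p) (z : Fin m → ℝ) :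
    Integrable
      (fun β : Fin p → ℝ => Real.exp (-(1 / 2) * ∑ i, |z i - (X *ᵥ β) i|))
      (volume : Measure (Fin p → ℝ)) := by
  have hX : Function.Injective X.mulVecLin :=
    injective_mulVecLin_of_rank_eq_card (by rw [hrank, Fintype.card_fin])
  refine (integrable_exp_neg_mul_norm_sub_of_injective volume hX one_half_pos z).mono'
    (by fun_prop) (ae_of_all _ fun β => ?_)
  have hsum : ‖z - X *ᵥ β‖ ≤ ∑ i, |z i - (X *ᵥ β) i| := Pi.norm_le_sum_norm _
  rw [norm_of_nonneg (exp_nonneg _), mulVecLin_apply]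
  exact exp_le_exp.mpr (by linarith)

/-- Remark after Proposition 1: propriety of the posterior for Bayesian
median regression. For `m ≥ p ≥ 1`, `X ∈ ℝ^{m×p}` of full column rank `p` with rows
`xᵢᵀ`, and `z ∈ ℝ^m`, the unnormalized posterior
`s(β, z) = exp(−(1/2) ∑ᵢ |zᵢ − xᵢᵀβ|)` is integrable over `β ∈ ℝ^p`. -/
theorem stmt14 (m p : ℕ) (hp : 1 ≤ p) (hpm : p ≤ m)
    (X : Matrix (Fin m) (Fin p) ℝ) (hrank : X.rank = p) (z : Fin m → ℝ) :
    Integrable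
      (fun β : Fin p → ℝ => Real.exp (-(1 / 2) * ∑ i, |z i - (X *ᵥ β) i|))
      (volume : Measure (Fin p → ℝ)) :=
  stmt14_general m p X hrank z
end

section
/- Let p, n ≥ 1 be integers and x₁, x₂, …, x_n ∈ ℝ^p. Then sup over (a₁, …, a_n) ∈ (0,∞)^n of x₁ᵀ ( x₁x₁ᵀ + ∑_{i=2}^n aᵢ xᵢxᵢᵀ + a₁ I_p )⁻² x₁ is finite (when n = 1 the sum ∑_{i=2}^n is empty, so the expression is sup over a > 0 of x₁ᵀ (x₁x₁ᵀ + a I_p)⁻² x₁). -/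
/-!
Write `M = x xᵀ + G` with `G = ∑ bᵢ yᵢ yᵢᵀ + a I` and `z = M⁻¹ x`, so the quantity to bound is
`‖z‖²`. Pairing `M z = x` with `z` gives `⟪x, z⟫ = ⟪x, z⟫² + ⟪z, G z⟫`, so `|⟪x, z⟫| ≤ 1` and the
component `P z` of `z` along `x` has norm at most `‖x‖⁻¹`.

Projecting `M z = x` onto `x^⊥` (projection `π = 1 - P`) gives `G' (π z) = -∑ bᵢ ⟪yᵢ, P z⟫ π yᵢ`,
where `G'` is `G` built from the vectors `π yᵢ`. Dividing by `bᵢ`, the equation `G' wᵢ = bᵢ π yᵢ`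
is an instance of the original problem for the vector `π yᵢ` and the family `(π yⱼ)_{j ≠ i}`, with
one vector fewer. By induction on the number of vectors the `wᵢ` are bounded uniformly in `a` and
`b`, hence so is `π z = -∑ ⟪yᵢ, P z⟫ wᵢ`.
-/

open Matrix InnerProductSpace Finset

section ShiftedGram

variable {ι E : Type*} [NormedAddCommGroup E] [InnerProductSpace ℝ E]

noncomputable def shiftedGram (s : Finset ι) (y : ι → E) (b : ι → ℝ) (a : ℝ) :
    E →L[ℝ] E :=
  ∑ i ∈ s, b i • rankOne ℝ (y i) (y i) + a • ContinuousLinearMap.id ℝ E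

variable {s : Finset ι} {y : ι → E} {b : ι → ℝ} {a : ℝ}

lemma shiftedGram_apply (s : Finset ι) (y : ι → E) (b : ι → ℝ) (a : ℝ) (z : E) :
    shiftedGram s y b a z = ∑ i ∈ s, (b i * ⟪y i, z⟫_ℝ) • y i + a • z := by
  simp [shiftedGram, mul_smul]

lemma inner_shiftedGram_self (z : E) :
    ⟪z, shiftedGram s y b a z⟫_ℝ = ∑ i ∈ s, b i * ⟪y i, z⟫_ℝ ^ 2 + a * ‖z‖ ^ 2 := by
  simp [shiftedGram_apply, inner_add_right, inner_sum, real_inner_smul_right, real_inner_comm,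
    sq, mul_assoc]

lemma mul_norm_sq_le_inner_shiftedGram (hb : ∀ i ∈ s, 0 ≤ b i) (z : E) :
    a * ‖z‖ ^ 2 ≤ ⟪z, shiftedGram s y b a z⟫_ℝ := by
  rw [inner_shiftedGram_self]
  have := sum_nonneg fun i hi => mul_nonneg (hb i hi) (sq_nonneg ⟪y i, z⟫_ℝ)
  linarith

lemma mul_norm_sq_le_inner_rankOne_add_shiftedGram (x : E) (hb : ∀ i ∈ s, 0 ≤ b i) (z : E) :
    a * ‖z‖ ^ 2 ≤ ⟪z, (rankOne ℝ x x + shiftedGram s y b a) z⟫_ℝ := by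
  have := mul_norm_sq_le_inner_shiftedGram (y := y) (a := a) hb z
  simp only [_root_.add_apply, rankOne_apply, inner_add_right, real_inner_smul_right,
    real_inner_comm x z]
  nlinarith [sq_nonneg ⟪z, x⟫_ℝ]

lemma injective_of_mul_norm_sq_le_inner {A : E →L[ℝ] E} (ha : 0 < a)
    (h : ∀ z, a * ‖z‖ ^ 2 ≤ ⟪z, A z⟫_ℝ) : Function.Injective A := by
  refine (injective_iff_map_eq_zero A).2 fun z hz => ?_
  have := h z
  rw [hz, inner_zero_right] at this
  have h2 : ‖z‖ ^ 2 ≤ 0 := by nlinarith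
  simpa using le_antisymm h2 (sq_nonneg _)

lemma shiftedGram_surjective [FiniteDimensional ℝ E] (ha : 0 < a) (hb : ∀ i ∈ s, 0 ≤ b i) :
    Function.Surjective (shiftedGram s y b a) :=
  LinearMap.injective_iff_surjective.1
    (injective_of_mul_norm_sq_le_inner ha (mul_norm_sq_le_inner_shiftedGram hb))

lemma shiftedGram_eq_smul_rankOne_add [DecidableEq ι] {i : ι} (hi : i ∈ s) (hbi : b i ≠ 0) :
    shiftedGram s y b a = b i • (rankOne ℝ (y i) (y i)
      + shiftedGram (s.erase i) y (fun j => b j / b i) (a / b i)) := by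
  ext z
  simp only [shiftedGram_apply, _root_.smul_apply, _root_.add_apply,
    rankOne_apply, ← add_sum_erase s _ hi, smul_add, smul_sum, smul_smul]
  field_simp
  rw [add_assoc]

lemma rankOne_add_shiftedGram_erase_apply_eq [DecidableEq ι] {i : ι} (hi : i ∈ s)
    (hbi : b i ≠ 0) {w : E} (hw : shiftedGram s y b a w = b i • y i) :
    rankOne ℝ (y i) (y i) w + shiftedGram (s.erase i) y (fun j => b j / b i) (a / b i) w =
      y i := by
  rw [shiftedGram_eq_smul_rankOne_add hi hbi, _root_.smul_apply] at hw
  exact smul_right_injective E hbi hw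

lemma abs_inner_le_one_of_rankOne_add_apply_eq {x z : E} {G : E →L[ℝ] E}
    (hG : 0 ≤ ⟪z, G z⟫_ℝ) (hz : rankOne ℝ x x z + G z = x) : |⟪x, z⟫_ℝ| ≤ 1 := by
  have h : ⟪x, z⟫_ℝ = ⟪x, z⟫_ℝ ^ 2 + ⟪z, G z⟫_ℝ := by
    conv_lhs => rw [real_inner_comm, ← hz]
    simp [inner_add_right, real_inner_smul_right, real_inner_comm, sq]
  exact abs_le.2 ⟨by nlinarith, by nlinarith⟩

lemma inner_starProjection_orthogonal_left (K : Submodule ℝ E) [K.HasOrthogonalProjection]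
    (u v : E) :
    ⟪Kᗮ.starProjection u, v⟫_ℝ = ⟪Kᗮ.starProjection u, Kᗮ.starProjection v⟫_ℝ := by
  rw [← Kᗮ.inner_starProjection_left_eq_right, Kᗮ.starProjection_eq_self_iff.2
    (Kᗮ.starProjection_apply_mem u)]

lemma shiftedGram_starProjection_orthogonal {K : Submodule ℝ E} [K.HasOrthogonalProjection]
    {x z : E} (hx : x ∈ K) (hz : rankOne ℝ x x z + shiftedGram s y b a z = x) :
    shiftedGram s (Kᗮ.starProjection ∘ y) b a (Kᗮ.starProjection z) =
      -∑ i ∈ s, (b i * ⟪K.starProjection (y i), z⟫_ℝ) • Kᗮ.starProjection (y i) := by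
  have h := congrArg Kᗮ.starProjection hz
  simp only [map_add, map_sum, map_smul, rankOne_apply, shiftedGram_apply,
    K.starProjection_orthogonal_apply_eq_zero hx, smul_zero, zero_add] at h
  rw [shiftedGram_apply, eq_neg_iff_add_eq_zero, ← h, add_right_comm, ← sum_add_distrib]
  congr 1
  refine sum_congr rfl fun i _ => ?_
  rw [Function.comp_apply, ← add_smul, ← mul_add, ← inner_starProjection_orthogonal_left,
    ← inner_add_left, add_comm, K.starProjection_add_starProjection_orthogonal]

lemma norm_starProjection_singleton (x z : E) :
    ‖(ℝ ∙ x).starProjection z‖ = |⟪x, z⟫_ℝ| / ‖x‖ := by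
  rcases eq_or_ne x 0 with rfl | hx
  · simp
  simp [Submodule.starProjection_singleton, norm_smul]
  field_simp [norm_ne_zero_iff.2 hx]

lemma norm_starProjection_singleton_le_inv {x z : E} (h : |⟪x, z⟫_ℝ| ≤ 1) :
    ‖(ℝ ∙ x).starProjection z‖ ≤ ‖x‖⁻¹ := by
  rw [norm_starProjection_singleton, div_eq_mul_inv]
  exact mul_le_of_le_one_left (inv_nonneg.2 (norm_nonneg x)) h

theorem exists_norm_le_of_rankOne_add_shiftedGram_eq [FiniteDimensional ℝ E] (s : Finset ι)
    (x : E) (y : ι → E) : ∃ C, ∀ a > 0, ∀ b : ι → ℝ, (∀ i ∈ s, 0 < b i) →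
      ∀ z, rankOne ℝ x x z + shiftedGram s y b a z = x → ‖z‖ ≤ C := by
  classical
  induction s using Finset.strongInduction generalizing x y with
  | H s ih =>
  set P := (ℝ ∙ x).starProjection
  set π := (ℝ ∙ x)ᗮ.starProjection
  have hC : ∀ i, ∃ C, i ∈ s → ∀ a > 0, ∀ b : ι → ℝ, (∀ j ∈ s.erase i, 0 < b j) → ∀ u,
      rankOne ℝ (π (y i)) (π (y i)) u + shiftedGram (s.erase i) (π ∘ y) b a u = π (y i) →
        ‖u‖ ≤ C := fun i =>
    if hi : i ∈ s then (ih _ (erase_ssubset hi) (π (y i)) (π ∘ y)).imp fun _ h _ => h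
    else ⟨0, fun h => absurd h hi⟩
  choose C hC using hC
  refine ⟨(1 + ∑ i ∈ s, ‖y i‖ * C i) * ‖x‖⁻¹, fun a ha b hb z hz => ?_⟩
  have hb0 : ∀ i ∈ s, 0 ≤ b i := fun i hi => (hb i hi).le
  have hPz : ‖P z‖ ≤ ‖x‖⁻¹ := norm_starProjection_singleton_le_inv
    (abs_inner_le_one_of_rankOne_add_apply_eq
      ((mul_norm_sq_le_inner_shiftedGram hb0 z).trans' (by positivity)) hz)
  choose W hW using fun i => shiftedGram_surjective (y := π ∘ y) ha hb0 (b i • π (y i))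
  have hWC : ∀ i ∈ s, ‖W i‖ ≤ C i := by
    intro i hi
    exact hC i hi (a / b i) (div_pos ha (hb i hi)) (fun j => b j / b i)
      (fun j hj => div_pos (hb j (mem_of_mem_erase hj)) (hb i hi)) _
      (rankOne_add_shiftedGram_erase_apply_eq (y := π ∘ y) hi (hb i hi).ne' (hW i))
  have hπz : π z = -∑ i ∈ s, ⟪P (y i), z⟫_ℝ • W i := by
    refine injective_of_mul_norm_sq_le_inner ha (mul_norm_sq_le_inner_shiftedGram
      (y := π ∘ y) hb0) ?_
    rw [shiftedGram_starProjection_orthogonal (Submodule.mem_span_singleton_self x) hz, map_neg,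
      map_sum]
    simp only [map_smul, hW, smul_smul, mul_comm]
    rfl
  have hπz_le : ‖π z‖ ≤ ∑ i ∈ s, ‖y i‖ * C i * ‖x‖⁻¹ := by
    rw [hπz, norm_neg]
    refine (norm_sum_le _ _).trans (sum_le_sum fun i hi => ?_)
    rw [norm_smul, Real.norm_eq_abs, Submodule.inner_starProjection_left_eq_right]
    calc |⟪y i, P z⟫_ℝ| * ‖W i‖ ≤ ‖y i‖ * ‖x‖⁻¹ * C i :=
          mul_le_mul ((abs_real_inner_le_norm _ _).trans (by gcongr)) (hWC i hi)
            (norm_nonneg _) (by positivity)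
      _ = ‖y i‖ * C i * ‖x‖⁻¹ := by ring
  calc ‖z‖ = ‖P z + π z‖ := by rw [Submodule.starProjection_add_starProjection_orthogonal]
    _ ≤ ‖P z‖ + ‖π z‖ := norm_add_le _ _
    _ ≤ (1 + ∑ i ∈ s, ‖y i‖ * C i) * ‖x‖⁻¹ := by
      rw [add_mul, one_mul, sum_mul]
      exact add_le_add hPz hπz_le

lemma toLp_mulVec_eq_rankOne_add_shiftedGram {n : Type*} [Fintype n] [DecidableEq n]
    (x : n → ℝ) (y : ι → n → ℝ) (u : n → ℝ) :
    WithLp.toLp 2 ((vecMulVec x x + ∑ i ∈ s, b i • vecMulVec (y i) (y i) + a • 1) *ᵥ u) =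
      (rankOne ℝ (WithLp.toLp 2 x) (WithLp.toLp 2 x) +
        shiftedGram s (fun i => WithLp.toLp 2 (y i)) b a) (WithLp.toLp 2 u) := by
  ext j
  simp [add_mulVec, sum_mulVec, smul_mulVec, vecMulVec_mulVec, shiftedGram_apply,
    EuclideanSpace.inner_toLp_toLp, dotProduct_comm, mul_assoc, add_assoc]

end ShiftedGram

lemma dotProduct_mul_self_mulVec {n : Type*} [Fintype n] {B : Matrix n n ℝ} (hB : B.IsSymm)
    (v : n → ℝ) : v ⬝ᵥ ((B * B) *ᵥ v) = (B *ᵥ v) ⬝ᵥ (B *ᵥ v) := by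
  rw [← mulVec_mulVec, dotProduct_mulVec, ← mulVec_transpose, hB.eq]

theorem stmt15_general (p k : ℕ) (x1 : Fin p → ℝ) (xs : Fin k → Fin p → ℝ) :
    ∃ C : ℝ, ∀ (a : ℝ) (b : Fin k → ℝ), 0 < a → (∀ i, 0 < b i) →
      x1 ⬝ᵥ
        ((((Matrix.vecMulVec x1 x1 + ∑ i, b i • Matrix.vecMulVec (xs i) (xs i)
              + a • (1 : Matrix (Fin p) (Fin p) ℝ))⁻¹ *
            (Matrix.vecMulVec x1 x1 + ∑ i, b i • Matrix.vecMulVec (xs i) (xs i)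
              + a • (1 : Matrix (Fin p) (Fin p) ℝ))⁻¹)) *ᵥ x1)
        ≤ C := by
  obtain ⟨C, hC⟩ := exists_norm_le_of_rankOne_add_shiftedGram_eq univ (WithLp.toLp 2 x1)
    (fun i => WithLp.toLp 2 (xs i))
  refine ⟨C ^ 2, fun a b ha hb => ?_⟩
  set M := vecMulVec x1 x1 + ∑ i, b i • vecMulVec (xs i) (xs i) +
    a • (1 : Matrix (Fin p) (Fin p) ℝ)
  have hb0 : ∀ i ∈ univ, 0 ≤ b i := fun i _ => (hb i).le
  have hM : IsUnit M := mulVec_injective_iff_isUnit.1 fun u v huv => by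
    have h := congrArg (WithLp.toLp 2) huv
    rw [toLp_mulVec_eq_rankOne_add_shiftedGram, toLp_mulVec_eq_rankOne_add_shiftedGram] at h
    exact WithLp.toLp_injective 2
      (injective_of_mul_norm_sq_le_inner ha (mul_norm_sq_le_inner_rankOne_add_shiftedGram _ hb0) h)
  have hMsymm : M.IsSymm := by simp [M, IsSymm, transpose_sum, transpose_vecMulVec]
  set z := M⁻¹ *ᵥ x1
  have hz : M *ᵥ z = x1 := by
    rw [mulVec_mulVec, mul_nonsing_inv M ((isUnit_iff_isUnit_det M).1 hM), one_mulVec]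
  have hzC := hC a ha b (fun i _ => hb i) (WithLp.toLp 2 z)
    ((toLp_mulVec_eq_rankOne_add_shiftedGram x1 xs z).symm.trans (congrArg _ hz))
  rw [dotProduct_mul_self_mulVec hMsymm.inv]
  calc z ⬝ᵥ z = ‖WithLp.toLp 2 z‖ ^ 2 := by
        rw [← real_inner_self_eq_norm_sq, EuclideanSpace.inner_toLp_toLp, star_trivial]
    _ ≤ C ^ 2 := pow_le_pow_left₀ (norm_nonneg _) hzC 2

/-- Lemma 3, Appendix C. Fix `x₁, x₂, …, x_n ∈ ℝ^p` (here `x₁ = x1` and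
`x₂, …, x_n` are given by `xs : Fin k → ℝ^p` with `n = k + 1 ≥ 1`, so `k = 0` is the case
`n = 1` with an empty sum).  Then
`sup over (a₁, …, a_n) ∈ (0,∞)^n of x₁ᵀ (x₁x₁ᵀ + ∑_{i=2}^n aᵢ xᵢxᵢᵀ + a₁ I_p)⁻² x₁`
is finite. -/
theorem stmt15 (p k : ℕ) (hp : 1 ≤ p) (x1 : Fin p → ℝ) (xs : Fin k → Fin p → ℝ) :
    ∃ C : ℝ, ∀ (a : ℝ) (b : Fin k → ℝ), 0 < a → (∀ i, 0 < b i) →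
      x1 ⬝ᵥ
        ((((Matrix.vecMulVec x1 x1 + ∑ i, b i • Matrix.vecMulVec (xs i) (xs i)
              + a • (1 : Matrix (Fin p) (Fin p) ℝ))⁻¹ *
            (Matrix.vecMulVec x1 x1 + ∑ i, b i • Matrix.vecMulVec (xs i) (xs i)
              + a • (1 : Matrix (Fin p) (Fin p) ℝ))⁻¹)) *ᵥ x1)
        ≤ C :=
  stmt15_general p k x1 xs
end

section
/- Let m ≥ p ≥ 1, let X ∈ ℝ^{m×p} have full column rank p with rows x₁ᵀ, …, x_mᵀ, and let z ∈ ℝ^m. For y ∈ (0,∞)^m let D(y) be the diagonal matrix with i-th diagonal entry 1/yᵢ. Then sup over y ∈ (0,∞)^m of ‖(Xᵀ D(y) X)⁻¹ Xᵀ D(y) z‖₂ is finite; in fact for every i and every y ∈ (0,∞)^m, xᵢᵀ ( xᵢxᵢᵀ + ∑_{j≠i} (yᵢ/y_j) x_j x_jᵀ )⁻² xᵢ ≤ Cᵢ(X) for a finite constant Cᵢ(X) depending only on X, and ‖(Xᵀ D(y) X)⁻¹ Xᵀ D(y) z‖₂ ≤ ∑_{i=1}^m |zᵢ| √(Cᵢ(X)).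 -/
/-!
By Cramer's rule and the Cauchy–Binet formula, the `k`-th coordinate of the weighted
least-squares solution `(Xᵀ D X)⁻¹ Xᵀ D z` equals
`∑_S π_S det X_S det X'_S / ∑_S π_S (det X_S)²`, where `S` runs over the `p`-element sets of
rows, `π_S = ∏_{j ∈ S} d_j ≥ 0`, and `X'` is `X` with its `k`-th column replaced by `z`.
This is a weighted average of the ratios `det X'_S / det X_S`, hence bounded by
`∑_S |det X'_S / det X_S|` whatever the positive weights are.

For `z = eᵢ` and weights `yᵢ / yⱼ` (so that the `i`-th weight is `1`), the solution is
`Mᵢ⁻¹ xᵢ` with `Mᵢ = xᵢxᵢᵀ + ∑_{j≠i} (yᵢ/yⱼ) xⱼxⱼᵀ` symmetric, so `xᵢᵀ Mᵢ⁻² xᵢ` is its squared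
norm. The solution is linear in `z`, and the triangle inequality gives the bound on its norm.
-/

namespace Set.powersetCard

variable {ι : Type*} [Fintype ι] [LinearOrder ι] {p : ℕ}

theorem sum_injective_eq_sum_perm {M : Type*} [AddCommMonoid M] (f : (Fin p → ι) → M) :
    ∑ φ with Function.Injective φ, f φ =
      ∑ S : powersetCard ι p, ∑ σ : Equiv.Perm (Fin p), f (ofFinEmbEquiv.symm S ∘ σ) := by
  rw [← Finset.sum_product']
  symm
  refine Finset.sum_bij (fun x _ => ofFinEmbEquiv.symm x.1 ∘ x.2) ?_ ?_ ?_ fun _ _ => rfl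
  · intro x _
    simpa using (ofFinEmbEquiv.symm x.1).injective.comp x.2.injective
  · rintro ⟨S, σ⟩ - ⟨T, τ⟩ - h
    have hST : S = T := by
      have hrange := congrArg Set.range h
      simp only [σ.surjective.range_comp, τ.surjective.range_comp] at hrange
      refine SetLike.ext fun a => ?_
      rw [← mem_range_ofFinEmbEquiv_symm_iff_mem, ← mem_range_ofFinEmbEquiv_symm_iff_mem, hrange]
    subst hST
    exact Prod.ext rfl (Equiv.ext fun r => (ofFinEmbEquiv.symm S).injective (congrFun h r))
  · intro φ hφ
    have hφ : Function.Injective φ := (Finset.mem_filter.mp hφ).2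
    set S := ofFinEmb p ι ⟨φ, hφ⟩
    have hmem : ∀ r, ∃ k, ofFinEmbEquiv.symm S k = φ r := fun r => by
      rw [← Set.mem_range, mem_range_ofFinEmbEquiv_symm_iff_mem, mem_ofFinEmb_iff_mem_range]
      exact ⟨r, rfl⟩
    choose g hg using hmem
    have hg_inj : Function.Injective g := fun r s h => hφ (by rw [← hg, ← hg, h])
    exact ⟨(S, Equiv.ofBijective g hg_inj.bijective_of_finite), Finset.mem_univ _, funext hg⟩

end Set.powersetCard

namespace Matrix

open Set.powersetCard

section CauchyBinet

variable {R : Type*} [CommRing R] {ι : Type*} [Fintype ι] {p : ℕ}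

theorem det_mul_eq_sum_prod_mul_det_submatrix (A : Matrix (Fin p) ι R)
    (B : Matrix ι (Fin p) R) :
    (A * B).det = ∑ φ : Fin p → ι, (∏ r, A r (φ r)) * (B.submatrix φ id).det := by
  have hrows : A * B = of fun r => ∑ j, A r j • B j := by
    ext r l
    simp [mul_apply, Finset.sum_apply]
  rw [hrows]
  change detRowAlternating.toMultilinearMap (fun r => ∑ j, A r j • B j) = _
  rw [MultilinearMap.map_sum]
  refine Finset.sum_congr rfl fun φ _ => ?_
  rw [MultilinearMap.map_smul_univ]
  rfl

theorem det_mul_eq_sum_powersetCard [LinearOrder ι] (A : Matrix (Fin p) ι R)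
    (B : Matrix ι (Fin p) R) :
    (A * B).det = ∑ S : Set.powersetCard ι p,
      (A.submatrix id (ofFinEmbEquiv.symm S)).det *
        (B.submatrix (ofFinEmbEquiv.symm S) id).det := by
  classical
  rw [det_mul_eq_sum_prod_mul_det_submatrix,
    ← Finset.sum_filter_of_ne (p := Function.Injective), sum_injective_eq_sum_perm]
  · refine Finset.sum_congr rfl fun S _ => ?_
    set e : Fin p → ι := ⇑(ofFinEmbEquiv.symm S)
    rw [← det_transpose (A.submatrix _ _), det_apply', Finset.sum_mul]
    refine Finset.sum_congr rfl fun σ _ => ?_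
    rw [show B.submatrix (e ∘ σ) id = (B.submatrix e id).submatrix σ id from rfl, det_permute]
    simp only [transpose_apply, submatrix_apply, id, Function.comp_apply]
    ring
  · intro φ _ hφ
    by_contra hinj
    obtain ⟨a, b, hab, hne⟩ := Function.not_injective_iff.mp hinj
    exact hφ (by rw [det_zero_of_row_eq hne (by ext; simp [hab]), mul_zero])

def rowMinor [LinearOrder ι] (X : Matrix ι (Fin p) R) (S : Set.powersetCard ι p) : R :=
  (X.submatrix (ofFinEmbEquiv.symm S) id).det

theorem det_transpose_mul_diagonal_mul [LinearOrder ι] [DecidableEq ι]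
    (X Y : Matrix ι (Fin p) R) (d : ι → R) :
    (Xᵀ * diagonal d * Y).det = ∑ S : Set.powersetCard ι p,
      (∏ k, d (ofFinEmbEquiv.symm S k)) * (rowMinor X S * rowMinor Y S) := by
  rw [det_mul_eq_sum_powersetCard]
  refine Finset.sum_congr rfl fun S _ => ?_
  have hsub : (Xᵀ * diagonal d).submatrix id (ofFinEmbEquiv.symm S) =
      (X.submatrix (ofFinEmbEquiv.symm S) id)ᵀ * diagonal (d ∘ ofFinEmbEquiv.symm S) := by
    ext r k
    simp [mul_diagonal]
  rw [hsub, det_mul, det_transpose, det_diagonal, rowMinor, rowMinor]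
  simp only [Function.comp_apply]
  ring

end CauchyBinet

section Gram

variable {R : Type*} [CommSemiring R] {ι n : Type*} [Fintype ι]

theorem IsSymm.dotProduct_mul_self_mulVec {N : Matrix ι ι R} (hN : N.IsSymm) (x : ι → R) :
    x ⬝ᵥ ((N * N) *ᵥ x) = (N *ᵥ x) ⬝ᵥ (N *ᵥ x) := by
  rw [← mulVec_mulVec, dotProduct_mulVec, ← mulVec_transpose, hN.eq]

variable [DecidableEq ι]

theorem transpose_mul_diagonal_mul_eq_sum_vecMulVec (X : Matrix ι n R) (d : ι → R) :
    Xᵀ * diagonal d * X = ∑ j, d j • vecMulVec (X j) (X j) := by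
  ext a b
  rw [mul_apply]
  simp only [mul_diagonal, transpose_apply, Matrix.sum_apply, Matrix.smul_apply,
    vecMulVec_apply, smul_eq_mul]
  exact Finset.sum_congr rfl fun j _ => by ring

theorem transpose_mul_diagonal_mul_eq_vecMulVec_add_sum_erase (X : Matrix ι n R)
    {d : ι → R} {i : ι} (hdi : d i = 1) :
    Xᵀ * diagonal d * X =
      vecMulVec (X i) (X i) + ∑ j ∈ Finset.univ.erase i, d j • vecMulVec (X j) (X j) := by
  rw [transpose_mul_diagonal_mul_eq_sum_vecMulVec,
    ← Finset.add_sum_erase _ _ (Finset.mem_univ i), hdi, one_smul]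

theorem transpose_mul_diagonal_mulVec_single (X : Matrix ι n R) (d : ι → R) (i : ι) :
    (Xᵀ * diagonal d) *ᵥ Pi.single i 1 = d i • X i := by
  ext k
  simp [mulVec_single, mul_diagonal, mul_comm]

theorem isSymm_transpose_mul_diagonal_mul (X : Matrix ι n R) (d : ι → R) :
    (Xᵀ * diagonal d * X).IsSymm := by
  rw [IsSymm, transpose_mul, transpose_mul, transpose_transpose, diagonal_transpose,
    Matrix.mul_assoc]

end Gram

end Matrix

open Matrix Set.powersetCard

section WeightedLeastSquares

variable {K : Type*} [Field K] {ι n : Type*} [Fintype ι] [DecidableEq ι] [Fintype n]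
  [DecidableEq n]

noncomputable def weightedLeastSquares (X : Matrix ι n K) (d z : ι → K) : n → K :=
  (Xᵀ * diagonal d * X)⁻¹ *ᵥ ((Xᵀ * diagonal d) *ᵥ z)

/-- Cramer's rule; it also holds when `Xᵀ * diagonal d * X` is singular, as both sides are
then `0`. -/
theorem weightedLeastSquares_apply (X : Matrix ι n K) (d z : ι → K) (k : n) :
    weightedLeastSquares X d z k =
      (Xᵀ * diagonal d * X.updateCol k z).det / (Xᵀ * diagonal d * X).det := by
  rw [weightedLeastSquares, Matrix.inv_def, smul_mulVec, ← cramer_eq_adjugate_mulVec,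
    Pi.smul_apply, cramer_apply, mul_updateCol, Ring.inverse_eq_inv', smul_eq_mul,
    div_eq_inv_mul]

theorem weightedLeastSquares_eq_sum_smul_single (X : Matrix ι n K) (d z : ι → K) :
    weightedLeastSquares X d z = ∑ i, z i • weightedLeastSquares X d (Pi.single i 1) := by
  conv_lhs => rw [pi_eq_sum_univ' z]
  simp only [weightedLeastSquares, mulVec_sum, mulVec_smul]

theorem dotProduct_inv_mul_inv_mulVec_eq_sum_sq (X : Matrix ι n K) {d : ι → K} {i : ι}
    (hdi : d i = 1) :
    X i ⬝ᵥ (((Xᵀ * diagonal d * X)⁻¹ * (Xᵀ * diagonal d * X)⁻¹) *ᵥ X i) =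
      ∑ k, weightedLeastSquares X d (Pi.single i 1) k ^ 2 := by
  rw [(isSymm_transpose_mul_diagonal_mul X d).inv.dotProduct_mul_self_mulVec,
    weightedLeastSquares, transpose_mul_diagonal_mulVec_single, hdi, one_smul, dotProduct]
  simp only [sq]

end WeightedLeastSquares

/-- Holds also for `a = 0`, where `b / 0 = 0`. -/
theorem abs_mul_eq_abs_div_mul_mul_self (a b : ℝ) : |a * b| = |b / a| * (a * a) := by
  rcases eq_or_ne a 0 with rfl | ha
  · simp
  · rw [abs_div, abs_mul, div_mul_eq_mul_div, mul_div_assoc, ← abs_mul_abs_self a,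
      mul_div_assoc, div_self (abs_ne_zero.mpr ha)]
    ring

theorem sqrt_sum_sq_sum_smul_le {ι n : Type*} [Fintype ι] [Fintype n] (z : ι → ℝ)
    (v : ι → n → ℝ) :
    √(∑ k, (∑ i, z i • v i) k ^ 2) ≤ ∑ i, |z i| * √(∑ k, v i k ^ 2) := by
  have hnorm : ∀ w : n → ℝ, √(∑ k, w k ^ 2) = ‖WithLp.toLp 2 w‖ := fun w => by
    simp [EuclideanSpace.norm_eq]
  simp only [hnorm, WithLp.toLp_sum, WithLp.toLp_smul]
  refine (norm_sum_le _ _).trans_eq ?_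
  simp [norm_smul]

section LeastSquaresBound

variable {ι : Type*} [Fintype ι] [DecidableEq ι] [LinearOrder ι] {p : ℕ}

theorem abs_weightedLeastSquares_apply_le (X : Matrix ι (Fin p) ℝ) {d : ι → ℝ}
    (hd : ∀ j, 0 ≤ d j) (z : ι → ℝ) (k : Fin p) :
    |weightedLeastSquares X d z k| ≤ ∑ S, |rowMinor (X.updateCol k z) S / rowMinor X S| := by
  set K := ∑ S, |rowMinor (X.updateCol k z) S / rowMinor X S|
  have hK : 0 ≤ K := Finset.sum_nonneg fun S _ => abs_nonneg _
  have hweight : ∀ S : Set.powersetCard ι p, 0 ≤ ∏ k, d (ofFinEmbEquiv.symm S k) :=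
    fun S => Finset.prod_nonneg fun k _ => hd _
  have hnum : |(Xᵀ * diagonal d * X.updateCol k z).det| ≤ K * (Xᵀ * diagonal d * X).det := by
    rw [det_transpose_mul_diagonal_mul, det_transpose_mul_diagonal_mul, Finset.mul_sum]
    refine (Finset.abs_sum_le_sum_abs _ _).trans (Finset.sum_le_sum fun S _ => ?_)
    rw [abs_mul, abs_of_nonneg (hweight S), abs_mul_eq_abs_div_mul_mul_self, mul_left_comm]
    exact mul_le_mul_of_nonneg_right
      (Finset.single_le_sum (f := fun T => |rowMinor (X.updateCol k z) T / rowMinor X T|)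
        (fun T _ => abs_nonneg _) (Finset.mem_univ S))
      (mul_nonneg (hweight S) (mul_self_nonneg _))
  rw [weightedLeastSquares_apply, abs_div]
  exact div_le_of_le_mul₀ (abs_nonneg _) hK
    (hnum.trans (mul_le_mul_of_nonneg_left (le_abs_self _) hK))

noncomputable def leastSquaresBound (X : Matrix ι (Fin p) ℝ) (z : ι → ℝ) : ℝ :=
  ∑ k, (∑ S, |rowMinor (X.updateCol k z) S / rowMinor X S|) ^ 2

theorem sum_sq_weightedLeastSquares_le (X : Matrix ι (Fin p) ℝ) {d : ι → ℝ}
    (hd : ∀ j, 0 ≤ d j) (z : ι → ℝ) :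
    ∑ k, weightedLeastSquares X d z k ^ 2 ≤ leastSquaresBound X z := by
  refine Finset.sum_le_sum fun k _ => ?_
  obtain ⟨hlower, hupper⟩ := abs_le.mp (abs_weightedLeastSquares_apply_le X hd z k)
  exact sq_le_sq' hlower hupper

end LeastSquaresBound

theorem stmt18_general (m p : ℕ)
    (X : Matrix (Fin m) (Fin p) ℝ) (z : Fin m → ℝ) :
    (∃ B : ℝ, ∀ y : Fin m → ℝ, (∀ j, 0 < y j) →
      Real.sqrt (∑ j, (((Xᵀ * Matrix.diagonal (fun i => (y i)⁻¹) * X)⁻¹ *ᵥ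
          ((Xᵀ * Matrix.diagonal (fun i => (y i)⁻¹)) *ᵥ z)) j) ^ 2) ≤ B) ∧
    ∃ C : Fin m → ℝ,
      (∀ (i : Fin m) (y : Fin m → ℝ), (∀ j, 0 < y j) →
        X i ⬝ᵥ
          (((Matrix.vecMulVec (X i) (X i) +
                ∑ j ∈ Finset.univ.erase i, (y i / y j) • Matrix.vecMulVec (X j) (X j))⁻¹ *
              (Matrix.vecMulVec (X i) (X i) +
                ∑ j ∈ Finset.univ.erase i, (y i / y j) • Matrix.vecMulVec (X j) (X j))⁻¹) *ᵥ
            X i)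
          ≤ C i) ∧
      ∀ y : Fin m → ℝ, (∀ j, 0 < y j) →
        Real.sqrt (∑ j, (((Xᵀ * Matrix.diagonal (fun i => (y i)⁻¹) * X)⁻¹ *ᵥ
            ((Xᵀ * Matrix.diagonal (fun i => (y i)⁻¹)) *ᵥ z)) j) ^ 2)
          ≤ ∑ i, |z i| * Real.sqrt (C i) := by
  set C : Fin m → ℝ := fun i => leastSquaresBound X (Pi.single i 1)
  have hnorm : ∀ y : Fin m → ℝ, (∀ j, 0 < y j) →
      √(∑ j, weightedLeastSquares X (fun i => (y i)⁻¹) z j ^ 2) ≤ ∑ i, |z i| * √(C i) := by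
    intro y hy
    rw [weightedLeastSquares_eq_sum_smul_single]
    refine (sqrt_sum_sq_sum_smul_le _ _).trans
      (Finset.sum_le_sum fun i _ => mul_le_mul_of_nonneg_left ?_ (abs_nonneg _))
    exact Real.sqrt_le_sqrt
      (sum_sq_weightedLeastSquares_le X (fun j => (inv_pos.mpr (hy j)).le) _)
  refine ⟨⟨_, hnorm⟩, C, fun i y hy => ?_, hnorm⟩
  have hdi : y i / y i = 1 := div_self (hy i).ne'
  rw [← transpose_mul_diagonal_mul_eq_vecMulVec_add_sum_erase X (d := fun j => y i / y j) hdi,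
    dotProduct_inv_mul_inv_mulVec_eq_sum_sq X (d := fun j => y i / y j) hdi]
  exact sum_sq_weightedLeastSquares_le X (fun j => (div_pos (hy i) (hy j)).le) _

/-- final step in the proof of Proposition 1. For `m ≥ p ≥ 1`, `X` of
full column rank `p` with rows `xᵢᵀ` (so `xᵢ = X i : Fin p → ℝ`), `z ∈ ℝ^m`, and
`D(y) = diagonal (1/yᵢ)` for `y ∈ (0,∞)^m`:
the supremum over `y ∈ (0,∞)^m` of `‖(Xᵀ D(y) X)⁻¹ Xᵀ D(y) z‖₂` is finite; in fact there
are finite constants `Cᵢ(X)` with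
`xᵢᵀ (xᵢxᵢᵀ + ∑_{j≠i} (yᵢ/yⱼ) xⱼxⱼᵀ)⁻² xᵢ ≤ Cᵢ(X)` for all `i` and `y`, and
`‖(Xᵀ D(y) X)⁻¹ Xᵀ D(y) z‖₂ ≤ ∑ᵢ |zᵢ| √(Cᵢ(X))`. -/
theorem stmt18 (m p : ℕ) (hp : 1 ≤ p) (hpm : p ≤ m)
    (X : Matrix (Fin m) (Fin p) ℝ) (hrank : X.rank = p) (z : Fin m → ℝ) :
    (∃ B : ℝ, ∀ y : Fin m → ℝ, (∀ j, 0 < y j) →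
      Real.sqrt (∑ j, (((Xᵀ * Matrix.diagonal (fun i => (y i)⁻¹) * X)⁻¹ *ᵥ
          ((Xᵀ * Matrix.diagonal (fun i => (y i)⁻¹)) *ᵥ z)) j) ^ 2) ≤ B) ∧
    ∃ C : Fin m → ℝ,
      (∀ (i : Fin m) (y : Fin m → ℝ), (∀ j, 0 < y j) →
        X i ⬝ᵥ
          (((Matrix.vecMulVec (X i) (X i) +
                ∑ j ∈ Finset.univ.erase i, (y i / y j) • Matrix.vecMulVec (X j) (X j))⁻¹ *
              (Matrix.vecMulVec (X i) (X i) +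
                ∑ j ∈ Finset.univ.erase i, (y i / y j) • Matrix.vecMulVec (X j) (X j))⁻¹) *ᵥ
            X i)
          ≤ C i) ∧
      ∀ y : Fin m → ℝ, (∀ j, 0 < y j) →
        Real.sqrt (∑ j, (((Xᵀ * Matrix.diagonal (fun i => (y i)⁻¹) * X)⁻¹ *ᵥ
            ((Xᵀ * Matrix.diagonal (fun i => (y i)⁻¹)) *ᵥ z)) j) ^ 2)
          ≤ ∑ i, |z i| * Real.sqrt (C i) :=
  stmt18_general m p X z
end

section
/- Fix r ∈ (0,1) and set θ = (1 − 2r)/(r(1 − r)) and τ = √(2/(r(1 − r))). Let U and V be independent random variables with U standard normal and V exponentially distributed with rate 1. Then the random variable θV + τ√V · U has the asymmetric Laplace distribution with parameter r, i.e., its law has density d(ε; r) = r(1 − r) [ e^{(1−r)ε} 1{ε < 0} + e^{−rε} 1{ε ≥ 0} ] with respect to Lebesgue measure on ℝ. -/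
/-!
Conditionally on `V = v`, the variable `θ V + τ √V U` is Gaussian with mean `θ v` and variance
`τ² v`, so its characteristic function is `E[exp((i t θ - t² τ² / 2) V)] = 1 / (1 - i t θ + t² τ² / 2)`.
Splitting the line at `0`, the asymmetric Laplace density has characteristic function
`r (1 - r) / ((1 - r + i t) (r - i t))`; with `θ = (1 - 2r)/(r(1 - r))` and `τ² = 2/(r(1 - r))`
the two agree, and characteristic functions determine finite measures.
-/

open MeasureTheory ProbabilityTheory Complex Set

lemma integral_cexp_mul_expMeasure {l : ℝ} (hl : 0 < l) {z : ℂ} (hz : z.re < l) :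
    ∫ v, cexp (z * v) ∂expMeasure l = l / (l - z) := by
  have hdens : ∀ v, (exponentialPDF l v).toReal • cexp (z * v)
      = (Ici 0).indicator (fun v : ℝ => l * cexp ((z - l) * v)) v := by
    intro v
    rcases lt_or_ge v 0 with hv | hv
    · simp [exponentialPDF_of_neg hv, hv]
    · rw [exponentialPDF_of_nonneg hv, ENNReal.toReal_ofReal (by positivity),
        indicator_of_mem (mem_Ici.2 hv), Complex.real_smul, sub_mul, Complex.exp_sub]
      push_cast
      field_simp
      rw [mul_assoc, ← Complex.exp_add]
      simp
  have hre : (z - l).re < 0 := by simpa using hz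
  have hne : z - l ≠ 0 := fun h => by simp [sub_eq_zero.1 h] at hz
  change ∫ v, cexp (z * v) ∂volume.withDensity (exponentialPDF l) = _
  rw [integral_withDensity_eq_integral_toReal_smul
      (show Measurable (exponentialPDF l) from (measurable_exponentialPDFReal l).ennreal_ofReal)
      (by simp [exponentialPDF]),
    funext hdens, integral_indicator measurableSet_Ici, integral_Ici_eq_integral_Ioi,
    integral_const_mul, integral_exp_mul_complex_Ioi hre, ← neg_sub z]
  field_simp
  simp

lemma ae_nonneg_expMeasure (l : ℝ) : ∀ᵐ v ∂expMeasure l, 0 ≤ v := by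
  refine (ae_withDensity_iff (measurable_gammaPDFReal 1 l).ennreal_ofReal).2 (ae_of_all _ ?_)
  intro v hv
  by_contra hneg
  exact hv (gammaPDF_of_neg (not_le.1 hneg))

lemma charFun_map_prod_gaussianReal {X : Type*} [MeasurableSpace X] {μ : Measure X}
    [IsFiniteMeasure μ] {a b : X → ℝ} (ha : Measurable a) (hb : Measurable b) (t : ℝ) :
    charFun ((μ.prod (gaussianReal 0 1)).map fun p => a p.1 + b p.1 * p.2) t
      = ∫ x, cexp (t * a x * I - (t * b x) ^ 2 / 2) ∂μ := by
  have hint : Integrable (fun p : X × ℝ => cexp (t * (a p.1 + b p.1 * p.2 : ℝ) * I))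
      (μ.prod (gaussianReal 0 1)) :=
    Integrable.of_bound (by fun_prop) 1 (ae_of_all _ fun p => by
      rw [← ofReal_mul, norm_exp_ofReal_mul_I])
  rw [charFun_apply_real, integral_map (by fun_prop) (by fun_prop), integral_prod _ hint]
  congr 1 with x
  have hsplit : ∀ u : ℝ, cexp (t * (a x + b x * u : ℝ) * I)
      = cexp (t * a x * I) * cexp ((t * b x : ℝ) * u * I) := fun u => by
    rw [← Complex.exp_add]; push_cast; ring_nf
  simp_rw [hsplit, integral_const_mul, ← charFun_apply_real, charFun_gaussianReal,
    ← Complex.exp_add]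
  push_cast
  ring_nf

lemma charFun_normal_exp_mixture {l : ℝ} (hl : 0 < l) (θ τ t : ℝ) :
    charFun (((expMeasure l).prod (gaussianReal 0 1)).map
        fun p => θ * p.1 + τ * √p.1 * p.2) t
      = l / (l - (t * θ * I - (t * τ) ^ 2 / 2)) := by
  have := isProbabilityMeasure_expMeasure hl
  rw [charFun_map_prod_gaussianReal (measurable_const_mul θ)
      (show Measurable fun v => τ * √v by fun_prop),
    ← integral_cexp_mul_expMeasure hl
      (by simp [← ofReal_mul, ← ofReal_pow]; nlinarith [sq_nonneg (t * τ)])]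
  refine integral_congr_ae ((ae_nonneg_expMeasure l).mono fun v hv => ?_)
  have hsq : ((√v : ℝ) : ℂ) ^ 2 = v := by rw [← ofReal_pow, Real.sq_sqrt hv]
  push_cast
  rw [mul_pow, mul_pow, hsq]
  ring_nf

noncomputable def asymLaplacePDF (r ε : ℝ) : ℝ :=
  r * (1 - r) * (if ε < 0 then Real.exp ((1 - r) * ε) else Real.exp (-r * ε))

noncomputable def asymLaplace (r : ℝ) : Measure ℝ :=
  volume.withDensity fun ε => ENNReal.ofReal (asymLaplacePDF r ε)

section AsymLaplace

variable {r : ℝ}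

lemma asymLaplacePDF_nonneg (hr : r ∈ Ioo (0 : ℝ) 1) (ε : ℝ) : 0 ≤ asymLaplacePDF r ε := by
  have : 0 < r * (1 - r) := mul_pos hr.1 (sub_pos.2 hr.2)
  unfold asymLaplacePDF
  split_ifs <;> positivity

lemma asymLaplacePDF_of_neg {ε : ℝ} (hε : ε < 0) :
    asymLaplacePDF r ε = r * (1 - r) * Real.exp ((1 - r) * ε) := by
  simp [asymLaplacePDF, hε]

lemma asymLaplacePDF_of_nonneg {ε : ℝ} (hε : 0 ≤ ε) :
    asymLaplacePDF r ε = r * (1 - r) * Real.exp (-r * ε) := by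
  simp [asymLaplacePDF, hε.not_gt]

lemma measurable_asymLaplacePDF : Measurable (asymLaplacePDF r) :=
  measurable_const.mul (Measurable.ite measurableSet_Iio (by fun_prop) (by fun_prop))

lemma integrable_asymLaplacePDF (hr : r ∈ Ioo (0 : ℝ) 1) : Integrable (asymLaplacePDF r) := by
  have hneg : IntegrableOn (asymLaplacePDF r) (Iio 0) :=
    IntegrableOn.congr_fun (((integrableOn_exp_mul_Iic (sub_pos.2 hr.2) 0).mono_set
      Iio_subset_Iic_self).const_mul _) (fun ε hε => (asymLaplacePDF_of_neg hε).symm)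
      measurableSet_Iio
  have hpos : IntegrableOn (asymLaplacePDF r) (Ici 0) :=
    IntegrableOn.congr_fun (((integrableOn_exp_mul_Ioi (neg_lt_zero.2 hr.1) (-1)).mono_set
      (Ici_subset_Ioi.2 neg_one_lt_zero)).const_mul _)
      (fun ε hε => (asymLaplacePDF_of_nonneg hε).symm) measurableSet_Ici
  rw [← integrableOn_univ, ← Iio_union_Ici]
  exact hneg.union hpos

lemma isFiniteMeasure_asymLaplace (hr : r ∈ Ioo (0 : ℝ) 1) : IsFiniteMeasure (asymLaplace r) :=
  isFiniteMeasure_withDensity_ofReal (integrable_asymLaplacePDF hr).hasFiniteIntegral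

lemma charFun_asymLaplace (hr : r ∈ Ioo (0 : ℝ) 1) (t : ℝ) :
    charFun (asymLaplace r) t = r * (1 - r) / ((1 - r + t * I) * (r - t * I)) := by
  set f : ℝ → ℂ := fun ε => asymLaplacePDF r ε * cexp (t * ε * I)
  have ha : 0 < (1 - r + t * I).re := by simpa using hr.2
  have hb : (-r + t * I).re < 0 := by simpa using hr.1
  have hneg : EqOn f (fun ε => r * (1 - r) * cexp ((1 - r + t * I) * ε)) (Iio 0) := by
    intro ε hε
    simp only [f, asymLaplacePDF_of_neg hε]
    push_cast
    rw [mul_assoc, ← Complex.exp_add]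
    ring_nf
  have hpos : EqOn f (fun ε => r * (1 - r) * cexp ((-r + t * I) * ε)) (Ici 0) := by
    intro ε hε
    simp only [f, asymLaplacePDF_of_nonneg (mem_Ici.1 hε)]
    push_cast
    rw [mul_assoc, ← Complex.exp_add]
    ring_nf
  have hf_neg : IntegrableOn f (Iio 0) :=
    IntegrableOn.congr_fun (((integrableOn_exp_mul_complex_Iic ha 0).mono_set
      Iio_subset_Iic_self).const_mul _) hneg.symm measurableSet_Iio
  have hf_pos : IntegrableOn f (Ici 0) :=
    IntegrableOn.congr_fun (((integrableOn_exp_mul_complex_Ioi hb (-1)).mono_set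
      (Ici_subset_Ioi.2 neg_one_lt_zero)).const_mul _) hpos.symm measurableSet_Ici
  have hcharFun : charFun (asymLaplace r) t = ∫ ε, f ε := by
    rw [charFun_apply_real, asymLaplace, integral_withDensity_eq_integral_toReal_smul
      measurable_asymLaplacePDF.ennreal_ofReal (ae_of_all _ fun _ => ENNReal.ofReal_lt_top)]
    congr 1 with ε
    rw [ENNReal.toReal_ofReal (asymLaplacePDF_nonneg hr ε), Complex.real_smul]
  rw [hcharFun, ← setIntegral_univ, ← Iio_union_Ici, setIntegral_union
      (Iio_disjoint_Ici le_rfl) measurableSet_Ici hf_neg hf_pos,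
    setIntegral_congr_fun measurableSet_Iio hneg, setIntegral_congr_fun measurableSet_Ici hpos,
    integral_const_mul, integral_const_mul, ← integral_Iic_eq_integral_Iio,
    integral_Ici_eq_integral_Ioi, integral_exp_mul_complex_Iic ha, integral_exp_mul_complex_Ioi hb]
  have h1 : 1 - r + t * I ≠ 0 := fun h => by simp [h] at ha
  have h2 : r - t * I ≠ 0 := fun h => hr.1.ne' (by simpa using congrArg Complex.re h)
  simp only [ofReal_zero, mul_zero, Complex.exp_zero]
  rw [show -(r : ℂ) + t * I = -(r - t * I) by ring]
  field_simp
  ring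

theorem map_normal_exp_mixture_eq_asymLaplace (hr : r ∈ Ioo (0 : ℝ) 1) :
    ((expMeasure 1).prod (gaussianReal 0 1)).map
        (fun p => (1 - 2 * r) / (r * (1 - r)) * p.1 + √(2 / (r * (1 - r))) * √p.1 * p.2)
      = asymLaplace r := by
  have := isProbabilityMeasure_expMeasure one_pos
  have := isFiniteMeasure_asymLaplace hr
  refine Measure.ext_of_charFun (funext fun t => ?_)
  have hr0 : (r : ℂ) ≠ 0 := ofReal_ne_zero.2 hr.1.ne'
  have hr1 : (1 : ℂ) - r ≠ 0 := by exact_mod_cast (sub_pos.2 hr.2).ne'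
  have hτ : ((√(2 / (r * (1 - r))) : ℝ) : ℂ) ^ 2 = 2 / (r * (1 - r)) := by
    rw [← ofReal_pow, Real.sq_sqrt (div_pos two_pos (mul_pos hr.1 (sub_pos.2 hr.2))).le]
    norm_cast
  have hden : (1 - r + t * I) * (r - t * I) = r * (1 - r) *
      (1 - (t * ((1 - 2 * r) / (r * (1 - r)) : ℝ) * I
        - (t * (√(2 / (r * (1 - r))) : ℝ)) ^ 2 / 2)) := by
    rw [mul_pow, hτ]
    push_cast
    field_simp
    linear_combination -(t : ℂ) ^ 2 * I_sq
  rw [charFun_normal_exp_mixture one_pos, charFun_asymLaplace hr, hden,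
    div_mul_cancel_left₀ (mul_ne_zero hr0 hr1)]
  simp

end AsymLaplace

/-- the normal–exponential mixture representation of the asymmetric
Laplace distribution, used by Kozumi and Kobayashi. Fix `r ∈ (0,1)`, set
`θ = (1 − 2r)/(r(1 − r))` and `τ = √(2/(r(1 − r)))`.  If `U` is standard normal, `V` is
exponential with rate 1, and `U`, `V` are independent, then `θ V + τ √V · U` has the
asymmetric Laplace distribution with parameter `r`, i.e. its law is the measure with
density `d(ε; r) = r(1 − r)[e^{(1−r)ε} 1{ε<0} + e^{−rε} 1{ε≥0}]` with respect to Lebesgue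
measure on `ℝ`. -/
theorem stmt19 (r : ℝ) (hr : r ∈ Set.Ioo (0 : ℝ) 1)
    {Ω : Type*} [MeasurableSpace Ω] (P : Measure Ω) [IsProbabilityMeasure P]
    (U V : Ω → ℝ) (hU_meas : Measurable U) (hV_meas : Measurable V)
    (hU : Measure.map U P = gaussianReal 0 1)
    (hV : Measure.map V P = expMeasure 1)
    (hUV : IndepFun U V P) :
    Measure.map
        (fun ω => ((1 - 2 * r) / (r * (1 - r))) * V ω +
          Real.sqrt (2 / (r * (1 - r))) * Real.sqrt (V ω) * U ω) P
      = volume.withDensity fun ε =>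
          ENNReal.ofReal (r * (1 - r) *
            (if ε < 0 then Real.exp ((1 - r) * ε) else Real.exp (-r * ε))) := by
  have hjoint : P.map (fun ω => (V ω, U ω)) = (expMeasure 1).prod (gaussianReal 0 1) := by
    rw [← hU, ← hV]
    exact (indepFun_iff_map_prod_eq_prod_map_map hV_meas.aemeasurable
      hU_meas.aemeasurable).1 hUV.symm
  have hmixture := map_normal_exp_mixture_eq_asymLaplace hr
  rw [← hjoint, Measure.map_map (by fun_prop) (by fun_prop)] at hmixture
  exact hmixture
end
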